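/- arXiv:2512.11604 — 7 statements merged into one kernel-verified Lean document; each statement's English description precedes it below -/
import Mathlib

section
/- Let g be a Lie algebra over a field K, and let q, w be Lie subalgebras of g. Then the set q_{w} := { Z ∈ q + w : ad(q)^h(Z) ⊆ q + w for all h ≥ 0 } is the largest Lie subalgebra of g containing q and contained in q + w. -/
variable {K : Type*} [Field K] {L : Type*} [LieRing L] [LieAlgebra K L]

/-- Membership in the linear sum `q + w` of two Lie subalgebras. -/
def memSum (q w : LieSubalgebra K L) (x : L) : Prop := ∃ a ∈ q, ∃ b ∈ w, x = a + b

/-- The set `q_{w} = { Z ∈ q + w : ad(q)^h (Z) ⊆ q + w for all h ≥ 0 }`, expressed via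
left-normed iterated brackets with elements of `q` (the case of the empty list gives the
condition `Z ∈ q + w`). -/
def wExtension (q w : LieSubalgebra K L) : Set L :=
  {Z | ∀ l : List L, (∀ z ∈ l, z ∈ q) → memSum q w (l.foldl (fun a b => ⁅a, b⁆) Z)}

/-!
The conditions defining `q_{w}` are linear in `Z`, so `q_{w}` is a subspace, and it is stable
under `ad(q)` by construction. For closure under brackets, write `X = a + b` and `Y = c + d`
with `a, c ∈ q` and `b, d ∈ w`; then
`⁅X, Y⁆ = ⁅X, c⁆ - ⁅Y, a⁆ - ⁅a, c⁆ + ⁅b, d⁆ ∈ q + w`, the first two terms because `q_{w}` is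
`ad(q)`-stable. Since `ad z` is a derivation,
`ad(z)⁅X, Y⁆ = ⁅ad(z) X, Y⁆ + ⁅X, ad(z) Y⁆` lets an induction on the number of brackets
show that every `ad(q)^h ⁅X, Y⁆` lies in `q + w`. Maximality is clear: a subalgebra
`s ⊇ q` is stable under `ad(q)`, so if `s ⊆ q + w` then every `ad(q)^h Z` with `Z ∈ s` is in
`q + w`.
-/

lemma memSum_iff_mem_sup {q w : LieSubalgebra K L} {x : L} :
    memSum q w x ↔ x ∈ q.toSubmodule ⊔ w.toSubmodule := by
  simp only [memSum, Submodule.mem_sup, LieSubalgebra.mem_toSubmodule, eq_comm]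

lemma List.foldl_lie_add (l : List L) (x y : L) :
    l.foldl (fun a b => ⁅a, b⁆) (x + y)
      = l.foldl (fun a b => ⁅a, b⁆) x + l.foldl (fun a b => ⁅a, b⁆) y := by
  induction l generalizing x y with
  | nil => rfl
  | cons z l ih => simpa only [List.foldl_cons, add_lie] using ih ⁅x, z⁆ ⁅y, z⁆

lemma List.foldl_lie_smul (l : List L) (c : K) (x : L) :
    l.foldl (fun a b => ⁅a, b⁆) (c • x) = c • l.foldl (fun a b => ⁅a, b⁆) x := by
  induction l generalizing x with
  | nil => rfl
  | cons z l ih => simpa only [List.foldl_cons, smul_lie] using ih ⁅x, z⁆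

lemma LieSubalgebra.foldl_lie_mem (s : LieSubalgebra K L) {x : L} (hx : x ∈ s) {l : List L}
    (hl : ∀ z ∈ l, z ∈ s) : l.foldl (fun a b => ⁅a, b⁆) x ∈ s := by
  induction l generalizing x with
  | nil => exact hx
  | cons z l ih =>
    exact ih (s.lie_mem hx (hl z List.mem_cons_self)) fun u hu => hl u (List.mem_cons_of_mem _ hu)

namespace wExtension

variable {q w : LieSubalgebra K L}

lemma memSum_of_mem {x : L} (hx : x ∈ wExtension q w) : memSum q w x :=
  hx [] (List.forall_mem_nil _)

lemma add_mem {x y : L} (hx : x ∈ wExtension q w) (hy : y ∈ wExtension q w) :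
    x + y ∈ wExtension q w := by
  intro l hl
  rw [List.foldl_lie_add, memSum_iff_mem_sup]
  exact Submodule.add_mem _ (memSum_iff_mem_sup.mp (hx l hl)) (memSum_iff_mem_sup.mp (hy l hl))

lemma smul_mem (c : K) {x : L} (hx : x ∈ wExtension q w) : c • x ∈ wExtension q w := by
  intro l hl
  rw [List.foldl_lie_smul, memSum_iff_mem_sup]
  exact Submodule.smul_mem _ c (memSum_iff_mem_sup.mp (hx l hl))

lemma lie_mem_of_mem_right {x z : L} (hx : x ∈ wExtension q w) (hz : z ∈ q) :
    ⁅x, z⁆ ∈ wExtension q w := fun l hl =>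
  hx (z :: l) (List.forall_mem_cons.mpr ⟨hz, hl⟩)

lemma memSum_lie {x y : L} (hx : x ∈ wExtension q w) (hy : y ∈ wExtension q w) :
    memSum q w ⁅x, y⁆ := by
  obtain ⟨a, ha, b, hb, rfl⟩ := memSum_of_mem hx
  obtain ⟨c, hc, d, hd, rfl⟩ := memSum_of_mem hy
  have hxc := memSum_iff_mem_sup.mp (memSum_of_mem (lie_mem_of_mem_right hx hc))
  have hya := memSum_iff_mem_sup.mp (memSum_of_mem (lie_mem_of_mem_right hy ha))
  have hac : ⁅a, c⁆ ∈ q.toSubmodule ⊔ w.toSubmodule :=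
    Submodule.mem_sup_left (q.lie_mem ha hc)
  have hbd : ⁅b, d⁆ ∈ q.toSubmodule ⊔ w.toSubmodule :=
    Submodule.mem_sup_right (w.lie_mem hb hd)
  have key : ⁅a + b, c + d⁆ = ⁅a + b, c⁆ - ⁅c + d, a⁆ - ⁅a, c⁆ + ⁅b, d⁆ := by
    simp only [lie_add, add_lie, ← lie_skew d a, ← lie_skew c a]
    abel
  rw [memSum_iff_mem_sup, key]
  exact Submodule.add_mem _ (Submodule.sub_mem _ (Submodule.sub_mem _ hxc hya) hac) hbd

lemma lie_mem {x y : L} (hx : x ∈ wExtension q w) (hy : y ∈ wExtension q w) :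
    ⁅x, y⁆ ∈ wExtension q w := by
  intro l hl
  induction l generalizing x y with
  | nil => exact memSum_lie hx hy
  | cons z l ih =>
    obtain ⟨hz, hl⟩ := List.forall_mem_cons.mp hl
    have derivation : ⁅⁅x, y⁆, z⁆ = ⁅⁅x, z⁆, y⁆ + ⁅x, ⁅y, z⁆⁆ := by
      rw [lie_lie, ← lie_skew ⁅x, z⁆ y]
      abel
    rw [List.foldl_cons, derivation, List.foldl_lie_add, memSum_iff_mem_sup]
    exact Submodule.add_mem _
      (memSum_iff_mem_sup.mp (ih (lie_mem_of_mem_right hx hz) hy hl))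
      (memSum_iff_mem_sup.mp (ih hx (lie_mem_of_mem_right hy hz) hl))

lemma subset_of_le_of_memSum {s : LieSubalgebra K L} (hqs : q ≤ s) (hs : ∀ x ∈ s, memSum q w x) :
    (s : Set L) ⊆ wExtension q w := fun _ hx _ hl =>
  hs _ (s.foldl_lie_mem hx fun z hz => hqs (hl z hz))

end wExtension

/-- `q_{w}` is the largest Lie subalgebra of `g` containing `q` and contained
in `q + w`. -/
theorem wExtension_isGreatest (q w : LieSubalgebra K L) :
    (∀ x ∈ wExtension q w, ∀ y ∈ wExtension q w, x + y ∈ wExtension q w) ∧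
    (∀ c : K, ∀ x ∈ wExtension q w, c • x ∈ wExtension q w) ∧
    (∀ x ∈ wExtension q w, ∀ y ∈ wExtension q w, ⁅x, y⁆ ∈ wExtension q w) ∧
    (q : Set L) ⊆ wExtension q w ∧
    (∀ x ∈ wExtension q w, memSum q w x) ∧
    (∀ s : LieSubalgebra K L, (q : Set L) ⊆ s → (∀ x ∈ s, memSum q w x) →
      (s : Set L) ⊆ wExtension q w) :=
  ⟨fun _ hx _ hy => wExtension.add_mem hx hy,
    fun c _ hx => wExtension.smul_mem c hx,
    fun _ hx _ hy => wExtension.lie_mem hx hy,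
    wExtension.subset_of_le_of_memSum le_rfl fun x hx => ⟨x, hx, 0, w.zero_mem, (add_zero x).symm⟩,
    fun _ hx => wExtension.memSum_of_mem hx,
    fun _ hqs hs => wExtension.subset_of_le_of_memSum hqs hs⟩
end

section
/- Let g be a complex Lie algebra, σ an anti-linear involutive automorphism of g, and q a complex Lie subalgebra. Define the Levi-degeneracy kernel K(g,q) := { Z ∈ σ(q) : for all k ≥ 1 and all Z₁,…,Z_k ∈ q, the iterated commutator [Z,Z₁,…,Z_k] lies in q + σ(q) }. Then K(g,q) is a Lie subalgebra of σ(q) containing q ∩ σ(q). -/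
/-!
Every `Z ∈ K` bracketed once with `z ∈ q` splits as `⁅Z, z⁆ = a + W` with `a ∈ q` and `W ∈ K`:
writing `⁅Z, z⁆ = a + σ b`, the element `W = σ b` lies in `σ(q)`, and its iterated commutators
are those of `Z` (with `z` prepended) minus those of `a`, which stay in `q`. Closure of `K` under
brackets then follows by induction on the number of commutators: the Leibniz rule
`⁅⁅X, Y⁆, z⁆ = ⁅⁅X, z⁆, Y⁆ + ⁅X, ⁅Y, z⁆⁆` splits each term either into an iterated commutator of
`X` or `Y` with one more entry from `q`, or into a bracket of two elements of `K`.
-/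

variable {L : Type*} [LieRing L] [LieAlgebra ℂ L]

/-- Membership in `q + σ(q)`. -/
def memSumConj (σ : L → L) (q : LieSubalgebra ℂ L) (y : L) : Prop :=
  ∃ a ∈ q, ∃ b ∈ q, y = a + σ b

/-- The Levi-degeneracy kernel `K(g,q) = { Z ∈ σ(q) : [Z,Z₁,…,Z_k] ∈ q + σ(q) for all k ≥ 1
and all Z₁,…,Z_k ∈ q }`.  Membership `Z ∈ σ(q)` is expressed as `σ Z ∈ q` (using that `σ` is an
involution), and the iterated commutators are left-normed. -/
def leviDegeneracyKernel (σ : L → L) (q : LieSubalgebra ℂ L) : Set L :=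
  {Z | σ Z ∈ q ∧ ∀ l : List L, l ≠ [] → (∀ z ∈ l, z ∈ q) →
    memSumConj σ q (l.foldl (fun a b => ⁅a, b⁆) Z)}

section LeftNormedBracket

variable (R : Type*) {M : Type*} [CommRing R] [LieRing M] [LieAlgebra R M]

def leftNormedBracket (l : List M) : M →ₗ[R] M where
  toFun x := l.foldl (fun a b => ⁅a, b⁆) x
  map_add' x y := by
    induction l generalizing x y with
    | nil => rfl
    | cons z l ih => simpa only [List.foldl_cons, add_lie] using ih ⁅x, z⁆ ⁅y, z⁆
  map_smul' c x := by
    induction l generalizing x with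
    | nil => rfl
    | cons z l ih => simpa only [List.foldl_cons, smul_lie] using ih ⁅x, z⁆

variable {R}

@[simp]
lemma leftNormedBracket_cons (z : M) (l : List M) (x : M) :
    leftNormedBracket R (z :: l) x = leftNormedBracket R l ⁅x, z⁆ := rfl

lemma leftNormedBracket_mem (q : LieSubalgebra R M) {x : M} (hx : x ∈ q) {l : List M}
    (hl : ∀ z ∈ l, z ∈ q) : leftNormedBracket R l x ∈ q := by
  induction l generalizing x with
  | nil => exact hx
  | cons z l ih =>
    exact ih (q.lie_mem hx (hl z List.mem_cons_self)) fun w hw => hl w (List.mem_cons_of_mem _ hw)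

end LeftNormedBracket

lemma lie_lie_eq_lie_lie_add_lie_lie {M : Type*} [LieRing M] (x y z : M) :
    ⁅⁅x, y⁆, z⁆ = ⁅⁅x, z⁆, y⁆ + ⁅x, ⁅y, z⁆⁆ := by
  rw [← lie_skew ⁅x, y⁆ z, leibniz_lie, ← lie_skew x z, ← lie_skew y z, neg_lie, lie_neg]
  abel

section Kernel

variable (σ : L →ₗ⋆[ℂ] L) (q : LieSubalgebra ℂ L)

def sumConj : Submodule ℂ L := q.toSubmodule ⊔ q.toSubmodule.map σ

variable {σ q}

lemma memSumConj_iff {y : L} : memSumConj σ q y ↔ y ∈ sumConj σ q := by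
  simp only [memSumConj, sumConj, Submodule.mem_sup, Submodule.mem_map,
    LieSubalgebra.mem_toSubmodule]
  constructor
  · rintro ⟨a, ha, b, hb, rfl⟩
    exact ⟨a, ha, σ b, ⟨b, hb, rfl⟩, rfl⟩
  · rintro ⟨a, ha, _, ⟨b, hb, rfl⟩, rfl⟩
    exact ⟨a, ha, b, hb, rfl⟩

lemma mem_sumConj_of_mem {y : L} (hy : y ∈ q) : y ∈ sumConj σ q :=
  Submodule.mem_sup_left hy

lemma mem_leviDegeneracyKernel_iff {Z : L} :
    Z ∈ leviDegeneracyKernel σ q ↔ σ Z ∈ q ∧ ∀ l : List L, l ≠ [] → (∀ z ∈ l, z ∈ q) →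
      leftNormedBracket ℂ l Z ∈ sumConj σ q := by
  simp only [leviDegeneracyKernel, Set.mem_ofPred_eq, memSumConj_iff]
  rfl

lemma mem_leviDegeneracyKernel_of_mem_inf {x : L} (hx : x ∈ q) (hσx : σ x ∈ q) :
    x ∈ leviDegeneracyKernel σ q :=
  mem_leviDegeneracyKernel_iff.2
    ⟨hσx, fun _ _ hl => mem_sumConj_of_mem (leftNormedBracket_mem q hx hl)⟩

lemma add_mem_leviDegeneracyKernel {x y : L} (hx : x ∈ leviDegeneracyKernel σ q)
    (hy : y ∈ leviDegeneracyKernel σ q) : x + y ∈ leviDegeneracyKernel σ q := by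
  rw [mem_leviDegeneracyKernel_iff] at *
  refine ⟨by rw [map_add]; exact q.add_mem hx.1 hy.1, fun l hl hlq => ?_⟩
  rw [map_add]
  exact add_mem (hx.2 l hl hlq) (hy.2 l hl hlq)

lemma smul_mem_leviDegeneracyKernel (c : ℂ) {x : L} (hx : x ∈ leviDegeneracyKernel σ q) :
    c • x ∈ leviDegeneracyKernel σ q := by
  rw [mem_leviDegeneracyKernel_iff] at *
  refine ⟨by rw [map_smulₛₗ]; exact q.smul_mem _ hx.1, fun l hl hlq => ?_⟩
  rw [map_smul]
  exact Submodule.smul_mem _ c (hx.2 l hl hlq)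

lemma exists_lie_eq_add_mem_leviDegeneracyKernel (hinv : ∀ x : L, σ (σ x) = x) {Z z : L}
    (hZ : Z ∈ leviDegeneracyKernel σ q) (hz : z ∈ q) :
    ∃ a ∈ q, ∃ W ∈ leviDegeneracyKernel σ q, ⁅Z, z⁆ = a + W := by
  obtain ⟨-, hZl⟩ := mem_leviDegeneracyKernel_iff.1 hZ
  obtain ⟨a, ha, b, hb, hab : ⁅Z, z⁆ = a + σ b⟩ := 
    hZ.2 [z] (List.cons_ne_nil _ _) (List.forall_mem_singleton.2 hz)
  refine ⟨a, ha, σ b, mem_leviDegeneracyKernel_iff.2 ⟨by rwa [hinv], fun m _ hm => ?_⟩, hab⟩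
  have hσb : σ b = ⁅Z, z⁆ - a := by
    rw [hab]
    abel
  have hzm : ∀ w ∈ z :: m, w ∈ q := List.forall_mem_cons.2 ⟨hz, hm⟩
  rw [hσb, map_sub, ← leftNormedBracket_cons]
  exact sub_mem (hZl _ (List.cons_ne_nil _ _) hzm)
    (mem_sumConj_of_mem (leftNormedBracket_mem q ha hm))

lemma leftNormedBracket_lie_mem_sumConj (hinv : ∀ x : L, σ (σ x) = x)
    (hbr : ∀ x y : L, σ ⁅x, y⁆ = ⁅σ x, σ y⁆)
    {l : List L} (hl : ∀ z ∈ l, z ∈ q) {X Y : L}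
    (hX : X ∈ leviDegeneracyKernel σ q) (hY : Y ∈ leviDegeneracyKernel σ q) :
    leftNormedBracket ℂ l ⁅X, Y⁆ ∈ sumConj σ q := by
  induction l generalizing X Y with
  | nil =>
    have hσ : σ ⁅σ X, σ Y⁆ = ⁅X, Y⁆ := by rw [hbr, hinv, hinv]
    exact Submodule.mem_sup_right ⟨_, q.lie_mem hX.1 hY.1, hσ⟩
  | cons z l ih =>
    obtain ⟨hz, hl⟩ := List.forall_mem_cons.1 hl
    obtain ⟨a, ha, W, hW, hXz⟩ := exists_lie_eq_add_mem_leviDegeneracyKernel hinv hX hz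
    obtain ⟨b, hb, W', hW', hYz⟩ := exists_lie_eq_add_mem_leviDegeneracyKernel hinv hY hz
    have hXl := (mem_leviDegeneracyKernel_iff.1 hX).2
    have hYl := (mem_leviDegeneracyKernel_iff.1 hY).2
    have hal : ∀ w ∈ a :: l, w ∈ q := List.forall_mem_cons.2 ⟨ha, hl⟩
    have hbl : ∀ w ∈ b :: l, w ∈ q := List.forall_mem_cons.2 ⟨hb, hl⟩
    rw [leftNormedBracket_cons, lie_lie_eq_lie_lie_add_lie_lie, hXz, hYz, add_lie, lie_add,
      ← lie_skew a Y, map_add, map_add, map_add, map_neg]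
    refine add_mem (add_mem (neg_mem ?_) (ih hl hW hY)) (add_mem ?_ (ih hl hX hW'))
    · exact hYl (a :: l) (List.cons_ne_nil _ _) hal
    · exact hXl (b :: l) (List.cons_ne_nil _ _) hbl

def leviDegeneracyKernelLieSubalgebra (hinv : ∀ x : L, σ (σ x) = x)
    (hbr : ∀ x y : L, σ ⁅x, y⁆ = ⁅σ x, σ y⁆) :
    LieSubalgebra ℂ L where
  carrier := leviDegeneracyKernel σ q
  add_mem' := add_mem_leviDegeneracyKernel
  zero_mem' := mem_leviDegeneracyKernel_of_mem_inf q.zero_mem (by rw [map_zero]; exact q.zero_mem)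
  smul_mem' := smul_mem_leviDegeneracyKernel
  lie_mem' {x y} hx hy := mem_leviDegeneracyKernel_iff.2
    ⟨by rw [hbr]; exact q.lie_mem hx.1 hy.1,
      fun _ _ hl => leftNormedBracket_lie_mem_sumConj hinv hbr hl hx hy⟩

end Kernel

/-- the Levi-degeneracy kernel is a Lie subalgebra of `σ(q)` containing
`q ∩ σ(q)`. -/
theorem leviDegeneracyKernel_isLieSubalgebra
    (σ : L → L)
    (hadd : ∀ x y : L, σ (x + y) = σ x + σ y)
    (hsmul : ∀ (c : ℂ) (x : L), σ (c • x) = (starRingEnd ℂ) c • σ x)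
    (hbr : ∀ x y : L, σ ⁅x, y⁆ = ⁅σ x, σ y⁆)
    (hinv : ∀ x : L, σ (σ x) = x)
    (q : LieSubalgebra ℂ L) :
    (∀ x ∈ leviDegeneracyKernel σ q, ∀ y ∈ leviDegeneracyKernel σ q,
      x + y ∈ leviDegeneracyKernel σ q) ∧
    (∀ c : ℂ, ∀ x ∈ leviDegeneracyKernel σ q, c • x ∈ leviDegeneracyKernel σ q) ∧
    (∀ x ∈ leviDegeneracyKernel σ q, ∀ y ∈ leviDegeneracyKernel σ q,
      ⁅x, y⁆ ∈ leviDegeneracyKernel σ q) ∧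
    (∀ x : L, x ∈ q → σ x ∈ q → x ∈ leviDegeneracyKernel σ q) := by
  let σₗ : L →ₗ⋆[ℂ] L := { toFun := σ, map_add' := hadd, map_smul' := hsmul }
  let K := leviDegeneracyKernelLieSubalgebra (σ := σₗ) (q := q) hinv hbr
  exact ⟨fun _ hx _ hy => K.add_mem hx hy, fun c _ hx => K.smul_mem c hx,
    fun _ hx _ hy => K.lie_mem hx hy,
    fun _ hx hσx => mem_leviDegeneracyKernel_of_mem_inf (σ := σₗ) hx hσx⟩
end

section
/- Let g be a complex Lie algebra with anti-linear involution σ and q a complex Lie subalgebra. Suppose Z ∈ σ(q) \ q has finite Levi-order k, and let (Z₁,…,Z_k) be a Levi-sequence of minimal length for Z (i.e. Z₁,…,Z_k ∈ q and [Z,Z₁,…,Z_k] ∉ q + σ(q)). Then for every permutation π of {1,…,k}, the sequence (Z_{π(1)},…,Z_{π(k)}) is also a Levi-sequence for Z. -/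
variable {L : Type*} [LieRing L] [LieAlgebra ℂ L]

/-- `(Z₁,…,Z_k)` is a Levi-sequence for `Z`: all `Z_i ∈ q` and the left-normed iterated
bracket `[Z, Z₁, …, Z_k]` does not lie in `q + σ(q)`. -/
def IsLeviSeq (σ : L → L) (q : LieSubalgebra ℂ L) (Z : L) {k : ℕ} (W : Fin k → L) : Prop :=
  (∀ i, W i ∈ q) ∧ ¬ memSumConj σ q ((List.ofFn W).foldl (fun a b => ⁅a, b⁆) Z)

/-!
Swapping two adjacent entries `x, y` of a sequence changes the iterated bracket
`[Z, …, x, y, …]` by `[Z, …, [y, x], …]` (Jacobi identity), the iterated bracket of a sequence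
that is one entry shorter and still has its entries in `q`. By minimality of `k`, such shorter
brackets lie in the additive group `q + σ(q)`; since every permutation is a product of adjacent
swaps, all rearrangements of a Levi-sequence of length `k` have the same iterated bracket modulo
`q + σ(q)`.
-/

section IteratedBracket

variable {𝔤 : Type*} [LieRing 𝔤]

theorem List.foldl_lie_sub (l : List 𝔤) (a b : 𝔤) :
    l.foldl (fun a b => ⁅a, b⁆) (a - b)
      = l.foldl (fun a b => ⁅a, b⁆) a - l.foldl (fun a b => ⁅a, b⁆) b := by
  induction l generalizing a b with
  | nil => rfl
  | cons c l ih => simp only [List.foldl_cons, sub_lie, ih]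

theorem List.foldl_lie_swap_sub (l : List 𝔤) (a x y : 𝔤) :
    (y :: x :: l).foldl (fun a b => ⁅a, b⁆) a - (x :: y :: l).foldl (fun a b => ⁅a, b⁆) a
      = (⁅y, x⁆ :: l).foldl (fun a b => ⁅a, b⁆) a := by
  simp only [List.foldl_cons, ← List.foldl_lie_sub]
  congr 1
  rw [lie_lie a y x, ← lie_skew y ⁅a, x⁆]
  abel

variable {R : Type*} [CommRing R] [LieAlgebra R 𝔤]

theorem List.Perm.foldl_lie_sub_mem {l l' : List 𝔤} (hll' : l.Perm l') (S : AddSubgroup 𝔤)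
    (q : LieSubalgebra R 𝔤) (Z : 𝔤) (k : ℕ)
    (hshort : ∀ m : List 𝔤, m.length < k → (∀ x ∈ m, x ∈ q) →
      m.foldl (fun a b => ⁅a, b⁆) Z ∈ S)
    (p : List 𝔤) (hp : ∀ x ∈ p, x ∈ q) (hl : ∀ x ∈ l, x ∈ q) (hlen : p.length + l.length ≤ k) :
    (p ++ l).foldl (fun a b => ⁅a, b⁆) Z - (p ++ l').foldl (fun a b => ⁅a, b⁆) Z ∈ S := by
  induction hll' generalizing p with
  | nil => simp
  | cons x _ ih =>
    have hpx : ∀ y ∈ p ++ [x], y ∈ q := by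
      simpa [or_imp, forall_and] using ⟨hp, hl x List.mem_cons_self⟩
    simpa using ih (p ++ [x]) hpx (fun y hy => hl y (List.mem_cons_of_mem x hy))
      (by simp only [List.length_append, List.length_cons, List.length_nil] at hlen ⊢; omega)
  | swap x y l =>
    rw [List.foldl_append, List.foldl_append, List.foldl_lie_swap_sub, ← List.foldl_append]
    refine hshort _ (by simp only [List.length_append, List.length_cons] at hlen ⊢; omega) ?_
    simp only [List.mem_append, List.mem_cons]
    rintro z (hz | rfl | hz)
    · exact hp z hz
    · exact q.lie_mem (hl y (by simp)) (hl x (by simp))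
    · exact hl z (by simp [hz])
  | trans h₁₂ _ ih₁₂ ih₂₃ =>
    have h₂₃ := ih₂₃ p hp (fun x hx => hl x (h₁₂.mem_iff.mpr hx)) (h₁₂.length_eq ▸ hlen)
    simpa using S.add_mem (ih₁₂ p hp hl hlen) h₂₃

end IteratedBracket

theorem memSumConj_iff_mem_sup_map (σ : L →+ L) (q : LieSubalgebra ℂ L) (y : L) :
    memSumConj σ q y ↔
      y ∈ q.toSubmodule.toAddSubgroup ⊔ q.toSubmodule.toAddSubgroup.map σ := by
  simp [memSumConj, AddSubgroup.mem_sup, eq_comm]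

theorem leviSeq_perm_general
    (σ : L → L)
    (hadd : ∀ x y : L, σ (x + y) = σ x + σ y)
    (q : LieSubalgebra ℂ L)
    (Z : L)
    (k : ℕ) (W : Fin k → L)
    (hW : IsLeviSeq σ q Z W)
    (hmin : ∀ j : ℕ, j < k → ∀ W' : Fin j → L, ¬ IsLeviSeq σ q Z W') :
    ∀ π : Equiv.Perm (Fin k), IsLeviSeq σ q Z (W ∘ π) := by
  intro π
  set S := q.toSubmodule.toAddSubgroup ⊔ q.toSubmodule.toAddSubgroup.map (AddMonoidHom.mk' σ hadd)
  have hS (y : L) : memSumConj σ q y ↔ y ∈ S := memSumConj_iff_mem_sup_map (AddMonoidHom.mk' σ hadd) q y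
  have hshort (m : List L) (hm : m.length < k) (hmq : ∀ x ∈ m, x ∈ q) :
      m.foldl (fun a b => ⁅a, b⁆) Z ∈ S := by
    have := hmin m.length hm m.get
    rw [IsLeviSeq, List.ofFn_get, hS, not_and_not_right] at this
    exact this fun i => hmq _ (m.get_mem i)
  have hWq : ∀ x ∈ List.ofFn (W ∘ π), x ∈ q := by simpa using fun i => hW.1 (π i)
  have hdiff := (π.ofFn_comp_perm W).foldl_lie_sub_mem S q Z k hshort [] (by simp) hWq (by simp)
  refine ⟨fun i => hW.1 (π i), fun h => hW.2 ?_⟩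
  rw [hS] at h ⊢
  simpa using S.sub_mem h hdiff

/-- a minimal-length Levi-sequence for `Z ∈ σ(q) \ q` remains a Levi-sequence
after any permutation of its entries. -/
theorem leviSeq_perm
    (σ : L → L)
    (hadd : ∀ x y : L, σ (x + y) = σ x + σ y)
    (hsmul : ∀ (c : ℂ) (x : L), σ (c • x) = (starRingEnd ℂ) c • σ x)
    (hbr : ∀ x y : L, σ ⁅x, y⁆ = ⁅σ x, σ y⁆)
    (hinv : ∀ x : L, σ (σ x) = x)
    (q : LieSubalgebra ℂ L)
    (Z : L) (hZmem : σ Z ∈ q) (hZnot : Z ∉ q)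
    (k : ℕ) (W : Fin k → L)
    (hW : IsLeviSeq σ q Z W)
    (hmin : ∀ j : ℕ, j < k → ∀ W' : Fin j → L, ¬ IsLeviSeq σ q Z W') :
    ∀ π : Equiv.Perm (Fin k), IsLeviSeq σ q Z (W ∘ π) :=
  leviSeq_perm_general σ hadd q Z k W hW hmin
end

section
/- Let (g_σ, q) be a CR algebra, i.e. g is a complex Lie algebra with anti-linear involution σ with fixed real form g_σ, and q a complex Lie subalgebra. Define the filtration F₀ = q ∩ g_σ, F₋₁ = (q + σ(q)) ∩ g_σ, F₋ₕ = F_{1−h} + [F_{1−h}, F₋₁] for h ≥ 2, and F_h = { Z ∈ F_{h−1} : [Z, F₋₁] ⊆ F_{h−1} } for h ≥ 1. Then [F_h, F_k] ⊆ F_{h+k} for all integers h, k. -/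
/-!
Only three facts use the CR structure: `F₀` is a subalgebra, `F₀ ⊆ F₋₁`, and `[F₀, F₋₁] ⊆ F₋₁`.
From them and the two recursions, `F` is decreasing and `[F_h, F₋₁] ⊆ F_{h-1}` for every `h`.
Negative `k` is then handled by downward induction on `k` through the Jacobi identity
`[x, [u, v]] = [[x, u], v] + [u, [x, v]]` on the generators of `F_k`, and nonnegative `h, k` by
induction on `h + k`, testing `[x, y]` against `F₋₁` with the same identity.
-/

open Submodule LieAlgebra

section RecursiveFiltration

variable {R L : Type*} [CommRing R] [LieRing L] [LieAlgebra R L]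

def NegativePartRecursive (F : ℤ → Submodule R L) : Prop :=
  ∀ h : ℤ, h ≤ -2 →
    F h = F (h + 1) ⊔ span R {z : L | ∃ x ∈ F (h + 1), ∃ y ∈ F (-1), z = ⁅x, y⁆}

def PositivePartRecursive (F : ℤ → Submodule R L) : Prop :=
  ∀ h : ℤ, 1 ≤ h → ∀ x : L, x ∈ F h ↔ x ∈ F (h - 1) ∧ ∀ y ∈ F (-1), ⁅x, y⁆ ∈ F (h - 1)

variable {F : ℤ → Submodule R L}

theorem lie_mem_of_lie_swap_mem {N : Submodule R L} {x y : L} (h : ⁅y, x⁆ ∈ N) : ⁅x, y⁆ ∈ N := by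
  rw [← lie_skew]
  exact neg_mem h

theorem sup_span_lie_le {P Q N : Submodule R L} (hP : P ≤ N)
    (hPQ : ∀ u ∈ P, ∀ v ∈ Q, ⁅u, v⁆ ∈ N) :
    P ⊔ span R {z : L | ∃ u ∈ P, ∃ v ∈ Q, z = ⁅u, v⁆} ≤ N :=
  sup_le hP <| span_le.mpr <| by
    rintro _ ⟨u, hu, v, hv, rfl⟩
    exact hPQ u hu v hv

theorem NegativePartRecursive.antitone (hneg : NegativePartRecursive F)
    (hpos : PositivePartRecursive F) (h0 : F 0 ≤ F (-1)) : Antitone F := by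
  refine antitone_int_of_succ_le fun h => ?_
  rcases le_or_gt h (-2) with hh | hh
  · rw [hneg h hh]
    exact le_sup_left
  rcases eq_or_lt_of_le (show -1 ≤ h by omega) with rfl | hh
  · exact h0
  · intro x hx
    simpa using ((hpos (h + 1) (by omega) x).1 hx).1

theorem NegativePartRecursive.lie_mem_sub_one (hneg : NegativePartRecursive F)
    (hpos : PositivePartRecursive F) (h0 : ∀ x ∈ F 0, ∀ y ∈ F (-1), ⁅x, y⁆ ∈ F (-1))
    {h : ℤ} {x y : L} (hx : x ∈ F h) (hy : y ∈ F (-1)) : ⁅x, y⁆ ∈ F (h - 1) := by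
  rcases lt_trichotomy h 0 with hh | rfl | hh
  · rw [hneg (h - 1) (by omega), sub_add_cancel]
    exact mem_sup_right (subset_span ⟨x, hx, y, hy, rfl⟩)
  · exact h0 x hx y hy
  · exact ((hpos h hh x).1 hx).2 y hy

section Induction

variable (hanti : Antitone F)
  (hlie : ∀ {h : ℤ} {x y : L}, x ∈ F h → y ∈ F (-1) → ⁅x, y⁆ ∈ F (h - 1))
include hanti hlie

theorem NegativePartRecursive.lie_mem_add_of_neg (hneg : NegativePartRecursive F) {k : ℤ}
    (hk : k ≤ -1) : ∀ {h : ℤ} {x y : L}, x ∈ F h → y ∈ F k → ⁅x, y⁆ ∈ F (h + k) := by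
  induction k, hk using Int.leInductionDown with
  | base => exact fun hx hy => hlie hx hy
  | pred k hk ih =>
    intro h x y hx hy
    rw [hneg (k - 1) (by omega), sub_add_cancel] at hy
    refine sup_span_lie_le (N := (F (h + (k - 1))).comap (ad R L x))
      (fun z hz => hanti (by omega) (ih hx hz)) (fun u hu v hv => ?_) hy
    show ⁅x, ⁅u, v⁆⁆ ∈ F (h + (k - 1))
    rw [leibniz_lie]
    exact add_mem (hanti (by omega) (hlie (ih hx hu) hv))
      (lie_mem_of_lie_swap_mem (hanti (by omega) (ih (hlie hx hv) hu)))

theorem PositivePartRecursive.lie_mem_add_of_nonneg (hpos : PositivePartRecursive F)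
    (h0 : ∀ x ∈ F 0, ∀ y ∈ F 0, ⁅x, y⁆ ∈ F 0) {h k : ℤ} (hh : 0 ≤ h) (hk : 0 ≤ k) {x y : L}
    (hx : x ∈ F h) (hy : y ∈ F k) : ⁅x, y⁆ ∈ F (h + k) := by
  obtain ⟨n, hn⟩ := Int.eq_ofNat_of_zero_le (add_nonneg hh hk)
  induction n generalizing h k x y with
  | zero =>
    obtain ⟨rfl, rfl⟩ : h = 0 ∧ k = 0 := by omega
    exact h0 x hx y hy
  | succ n ih =>
    have key : ∀ {h k : ℤ} {x y : L}, 0 ≤ h → 1 ≤ k → h + k = n + 1 → x ∈ F h → y ∈ F k →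
        ⁅x, y⁆ ∈ F (h + k) := by
      intro h k x y hh hk hn hx hy
      refine (hpos _ (by omega) _).2 ⟨?_, fun z hz => ?_⟩
      · exact hanti (by omega) (ih hh (by omega) hx (hanti (by omega : k - 1 ≤ k) hy) (by omega))
      rw [lie_lie]
      refine sub_mem (hanti (by omega) (ih hh (by omega) hx (hlie hy hz) (by omega))) ?_
      rcases eq_or_lt_of_le hh with rfl | hh
      · exact hanti (by omega) (hlie hy (hanti (by omega) (hlie hx hz)))
      · exact hanti (by omega) (ih (by omega) (by omega) hy (hlie hx hz) (by omega))
    rcases eq_or_lt_of_le hk with rfl | hk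
    · exact lie_mem_of_lie_swap_mem (hanti (by omega) (key hk (by omega) (by omega) hy hx))
    · exact key hh hk (by omega) hx hy

end Induction

theorem NegativePartRecursive.lie_mem_add (hneg : NegativePartRecursive F)
    (hpos : PositivePartRecursive F) (h00 : ∀ x ∈ F 0, ∀ y ∈ F 0, ⁅x, y⁆ ∈ F 0)
    (h0 : F 0 ≤ F (-1)) (h01 : ∀ x ∈ F 0, ∀ y ∈ F (-1), ⁅x, y⁆ ∈ F (-1))
    {h k : ℤ} {x y : L} (hx : x ∈ F h) (hy : y ∈ F k) : ⁅x, y⁆ ∈ F (h + k) := by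
  have hanti := hneg.antitone hpos h0
  have hlie : ∀ {h : ℤ} {x y : L}, x ∈ F h → y ∈ F (-1) → ⁅x, y⁆ ∈ F (h - 1) :=
    hneg.lie_mem_sub_one hpos h01
  rcases lt_or_ge k 0 with hk | hk
  · exact hneg.lie_mem_add_of_neg hanti hlie (by omega) hx hy
  rcases lt_or_ge h 0 with hh | hh
  · rw [add_comm]
    exact lie_mem_of_lie_swap_mem (hneg.lie_mem_add_of_neg hanti hlie (by omega) hy hx)
  · exact hpos.lie_mem_add_of_nonneg hanti hlie h00 hh hk hx hy

end RecursiveFiltration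

theorem crFiltration_bracket_le_general
    (L : Type*) [LieRing L] [LieAlgebra ℂ L]
    (σ : L → L)
    (hbr : ∀ x y : L, σ ⁅x, y⁆ = ⁅σ x, σ y⁆)
    (q : LieSubalgebra ℂ L)
    (F : ℤ → Submodule ℝ L)
    (hF0 : (F 0 : Set L) = {x | x ∈ q ∧ σ x = x})
    (hFm1 : (F (-1) : Set L) = {x | σ x = x ∧ ∃ a ∈ q, ∃ b ∈ q, x = a + σ b})
    (hFneg : ∀ h : ℤ, h ≤ -2 →
      F h = F (h + 1) ⊔ Submodule.span ℝ {z : L | ∃ x ∈ F (h + 1), ∃ y ∈ F (-1), z = ⁅x, y⁆})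
    (hFpos : ∀ h : ℤ, 1 ≤ h →
      (F h : Set L) = {x | x ∈ F (h - 1) ∧ ∀ y ∈ F (-1), ⁅x, y⁆ ∈ F (h - 1)}) :
    ∀ h k : ℤ, ∀ x ∈ F h, ∀ y ∈ F k, ⁅x, y⁆ ∈ F (h + k) := by
  have mem0 (x : L) : x ∈ F 0 ↔ x ∈ q ∧ σ x = x := Set.ext_iff.mp hF0 x
  have mem1 (x : L) : x ∈ F (-1) ↔ σ x = x ∧ ∃ a ∈ q, ∃ b ∈ q, x = a + σ b :=
    Set.ext_iff.mp hFm1 x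
  have h00 : ∀ x ∈ F 0, ∀ y ∈ F 0, ⁅x, y⁆ ∈ F 0 := by
    intro x hx y hy
    obtain ⟨hxq, hxσ⟩ := (mem0 x).1 hx
    obtain ⟨hyq, hyσ⟩ := (mem0 y).1 hy
    exact (mem0 _).2 ⟨q.lie_mem hxq hyq, by rw [hbr, hxσ, hyσ]⟩
  have h0 : F 0 ≤ F (-1) := by
    intro x hx
    obtain ⟨hxq, hxσ⟩ := (mem0 x).1 hx
    exact (mem1 x).2 ⟨hxσ, 0, q.zero_mem, x, hxq, by rw [hxσ, zero_add]⟩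
  have h01 : ∀ x ∈ F 0, ∀ y ∈ F (-1), ⁅x, y⁆ ∈ F (-1) := by
    intro x hx y hy
    obtain ⟨hxq, hxσ⟩ := (mem0 x).1 hx
    obtain ⟨hyσ, a, ha, b, hb, rfl⟩ := (mem1 y).1 hy
    refine (mem1 _).2 ⟨by rw [hbr, hxσ, hyσ], ⁅x, a⁆, q.lie_mem hxq ha, ⁅x, b⁆, q.lie_mem hxq hb, ?_⟩
    rw [lie_add, hbr, hxσ]
  -- restriction of scalars, whose `Module ℝ L` is `Module.complexToReal`, the one `F` lives in
  let _ : LieAlgebra ℝ L := RestrictScalars.lieAlgebra ℝ ℂ L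
  intro h k x hx y hy
  exact NegativePartRecursive.lie_mem_add hFneg
    (fun h hh x => Set.ext_iff.mp (hFpos h hh) x) h00 h0 h01 hx hy

/-- for a CR algebra `(g_σ, q)` the canonical filtration
`F₀ = q ∩ g_σ`, `F₋₁ = (q + σ(q)) ∩ g_σ`, `F₋ₕ = F_{1−h} + [F_{1−h}, F₋₁]` (h ≥ 2),
`F_h = { Z ∈ F_{h−1} : [Z, F₋₁] ⊆ F_{h−1} }` (h ≥ 1) satisfies
`[F_h, F_k] ⊆ F_{h+k}` for all integers `h, k`.  The `F_h` are real subspaces of `g`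
(real scalars act via `Module.complexToReal`). -/
theorem crFiltration_bracket_le
    (L : Type*) [LieRing L] [LieAlgebra ℂ L]
    (σ : L → L)
    (hadd : ∀ x y : L, σ (x + y) = σ x + σ y)
    (hsmul : ∀ (c : ℂ) (x : L), σ (c • x) = (starRingEnd ℂ) c • σ x)
    (hbr : ∀ x y : L, σ ⁅x, y⁆ = ⁅σ x, σ y⁆)
    (hinv : ∀ x : L, σ (σ x) = x)
    (q : LieSubalgebra ℂ L)
    (F : ℤ → Submodule ℝ L)
    (hF0 : (F 0 : Set L) = {x | x ∈ q ∧ σ x = x})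
    (hFm1 : (F (-1) : Set L) = {x | σ x = x ∧ ∃ a ∈ q, ∃ b ∈ q, x = a + σ b})
    (hFneg : ∀ h : ℤ, h ≤ -2 →
      F h = F (h + 1) ⊔ Submodule.span ℝ {z : L | ∃ x ∈ F (h + 1), ∃ y ∈ F (-1), z = ⁅x, y⁆})
    (hFpos : ∀ h : ℤ, 1 ≤ h →
      (F h : Set L) = {x | x ∈ F (h - 1) ∧ ∀ y ∈ F (-1), ⁅x, y⁆ ∈ F (h - 1)}) :
    ∀ h k : ℤ, ∀ x ∈ F h, ∀ y ∈ F k, ⁅x, y⁆ ∈ F (h + k) :=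
  crFiltration_bracket_le_general L σ hbr q F hF0 hFm1 hFneg hFpos
end

section
/- Let g be a complex Lie algebra with anti-linear involution σ, q a complex Lie subalgebra, and w a complex Lie subalgebra with q ∩ σ(q) ⊆ w ⊆ q + σ(q). Set p := { Z ∈ w : [Z, σ(w)] ⊆ w + σ(w) }. Then p is a Lie subalgebra of g, and l := p + σ(p) is a Lie subalgebra of g satisfying q ∩ σ(q) ⊆ l ⊆ q + σ(q). -/
variable {L : Type*} [LieRing L] [LieAlgebra ℂ L]

/-- The set `p = { Z ∈ w : [Z, σ(w)] ⊆ w + σ(w) }`. -/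
def pSet (σ : L → L) (w : LieSubalgebra ℂ L) : Set L :=
  {Z | Z ∈ w ∧ ∀ u ∈ w, ∃ a ∈ w, ∃ b ∈ w, ⁅Z, σ u⁆ = a + σ b}

/-- The set `l = p + σ(p)`. -/
def lSet (σ : L → L) (w : LieSubalgebra ℂ L) : Set L :=
  {x | ∃ a ∈ pSet σ w, ∃ b ∈ pSet σ w, x = a + σ b}

/-!
With `V := w + σ(w)`, the set `p` is `w ∩ N(V)`, where `N(V) = {z | [z, V] ⊆ V}` is a Lie
subalgebra by the Jacobi identity. As `σ(V) = V`, also `σ(N(V)) = N(V)`, so for `x, y ∈ p` the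
bracket `X = [x, σ y]` lies in `N(V) ∩ V`. Writing `X = a + σ b` with `a, b ∈ w`, the relations
`[a, σ u] = [X, σ u] - σ [b, u]` and `[b, σ u] = σ ([X, u] - [a, u])` put `a` and `b` in `p`.
Hence `[p, σ(p)] ⊆ p + σ(p)`, which makes `l = p + σ(p)` closed under the bracket.
-/

namespace Submodule

variable {R L : Type*} [CommRing R] [LieRing L] [LieAlgebra R L]

def lieStabilizer (V : Submodule R L) : LieSubalgebra R L where
  carrier := {z | ∀ v ∈ V, ⁅z, v⁆ ∈ V}
  add_mem' hx hy v hv := by rw [add_lie]; exact V.add_mem (hx v hv) (hy v hv)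
  zero_mem' v _ := by rw [zero_lie]; exact V.zero_mem
  smul_mem' c _ hx v hv := by rw [smul_lie]; exact V.smul_mem c (hx v hv)
  lie_mem' hx hy v hv := by rw [lie_lie]; exact V.sub_mem (hx _ (hy v hv)) (hy _ (hx v hv))

@[simp]
theorem mem_lieStabilizer {V : Submodule R L} {z : L} :
    z ∈ V.lieStabilizer ↔ ∀ v ∈ V, ⁅z, v⁆ ∈ V :=
  Iff.rfl

end Submodule

variable (τ : L →ₗ⋆[ℂ] L)

def conjSum (S : Submodule ℂ L) : Submodule ℂ L :=
  S ⊔ S.map τ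

variable {τ} in
theorem mem_conjSum {S : Submodule ℂ L} {x : L} :
    x ∈ conjSum τ S ↔ ∃ a ∈ S, ∃ b ∈ S, x = a + τ b := by
  simp only [conjSum, Submodule.mem_sup, Submodule.mem_map]
  constructor
  · rintro ⟨a, ha, _, ⟨b, hb, rfl⟩, rfl⟩
    exact ⟨a, ha, b, hb, rfl⟩
  · rintro ⟨a, ha, b, hb, rfl⟩
    exact ⟨a, ha, _, ⟨b, hb, rfl⟩, rfl⟩

theorem le_conjSum (S : Submodule ℂ L) : S ≤ conjSum τ S := le_sup_left

theorem map_le_conjSum (S : Submodule ℂ L) : S.map τ ≤ conjSum τ S := le_sup_right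

theorem conjSum_mono {S T : Submodule ℂ L} (h : S ≤ T) : conjSum τ S ≤ conjSum τ T :=
  sup_le_sup h (Submodule.map_mono h)

theorem apply_mem_conjSum (hτ : Function.Involutive τ) {S : Submodule ℂ L} {x : L}
    (hx : x ∈ conjSum τ S) : τ x ∈ conjSum τ S := by
  obtain ⟨a, ha, b, hb, rfl⟩ := mem_conjSum.1 hx
  exact mem_conjSum.2 ⟨b, hb, a, ha, by rw [map_add, hτ, add_comm]⟩

theorem conjSum_conjSum (hτ : Function.Involutive τ) (S : Submodule ℂ L) :
    conjSum τ (conjSum τ S) = conjSum τ S :=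
  le_antisymm (sup_le le_rfl (Submodule.map_le_iff_le_comap.2 fun _ => apply_mem_conjSum τ hτ))
    (le_conjSum τ _)

theorem apply_mem_lieStabilizer (hτ : Function.Involutive τ)
    (hlie : ∀ x y, τ ⁅x, y⁆ = ⁅τ x, τ y⁆) {V : Submodule ℂ L} (hV : ∀ v ∈ V, τ v ∈ V) {z : L}
    (hz : z ∈ V.lieStabilizer) : τ z ∈ V.lieStabilizer := fun v hv => by
  rw [← hτ v, ← hlie]
  exact hV _ (hz _ (hV v hv))

def pSubalgebra (w : LieSubalgebra ℂ L) : LieSubalgebra ℂ L :=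
  w ⊓ (conjSum τ w.toSubmodule).lieStabilizer

theorem pSubalgebra_le (w : LieSubalgebra ℂ L) : pSubalgebra τ w ≤ w := inf_le_left

theorem mem_pSubalgebra_iff {w : LieSubalgebra ℂ L} {z : L} :
    z ∈ pSubalgebra τ w ↔ z ∈ w ∧ ∀ u ∈ w, ⁅z, τ u⁆ ∈ conjSum τ w.toSubmodule := by
  rw [pSubalgebra, LieSubalgebra.mem_inf, Submodule.mem_lieStabilizer]
  refine and_congr_right fun hz =>
    ⟨fun h u hu => h _ (map_le_conjSum τ _ ⟨u, hu, rfl⟩), fun h v hv => ?_⟩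
  obtain ⟨a, ha, b, hb, rfl⟩ := mem_conjSum.1 hv
  rw [lie_add]
  exact add_mem (le_conjSum τ _ (w.lie_mem hz ha)) (h b hb)

theorem coe_pSubalgebra (w : LieSubalgebra ℂ L) : (pSubalgebra τ w : Set L) = pSet τ w := by
  ext z
  simp only [SetLike.mem_coe, mem_pSubalgebra_iff, mem_conjSum]
  rfl

theorem coe_conjSum_pSubalgebra (w : LieSubalgebra ℂ L) :
    (conjSum τ (pSubalgebra τ w).toSubmodule : Set L) = lSet τ w := by
  ext x
  simp only [SetLike.mem_coe, mem_conjSum, LieSubalgebra.mem_toSubmodule, lSet, ← coe_pSubalgebra,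
    Set.mem_ofPred_eq]

theorem lie_apply_mem_conjSum_pSubalgebra (hτ : Function.Involutive τ)
    (hlie : ∀ x y, τ ⁅x, y⁆ = ⁅τ x, τ y⁆) {w : LieSubalgebra ℂ L} {x y : L}
    (hx : x ∈ pSubalgebra τ w) (hy : y ∈ pSubalgebra τ w) :
    ⁅x, τ y⁆ ∈ conjSum τ (pSubalgebra τ w).toSubmodule := by
  set V := conjSum τ w.toSubmodule
  have hVτ : ∀ v ∈ V, τ v ∈ V := fun _ => apply_mem_conjSum τ hτ
  have hτw : ∀ u ∈ w, τ u ∈ V := fun u hu => map_le_conjSum τ _ ⟨u, hu, rfl⟩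
  obtain ⟨hxw, hxV⟩ := (LieSubalgebra.mem_inf _ _ _).1 hx
  obtain ⟨hyw, hyV⟩ := (LieSubalgebra.mem_inf _ _ _).1 hy
  have hX : ⁅x, τ y⁆ ∈ V.lieStabilizer :=
    LieSubalgebra.lie_mem _ hxV (apply_mem_lieStabilizer τ hτ hlie hVτ hyV)
  obtain ⟨a, ha, b, hb, hab⟩ := mem_conjSum.1 (hxV _ (hτw y hyw))
  refine mem_conjSum.2 ⟨a, (mem_pSubalgebra_iff τ).2 ⟨ha, fun u hu => ?_⟩,
    b, (mem_pSubalgebra_iff τ).2 ⟨hb, fun u hu => ?_⟩, hab⟩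
  · have : ⁅a, τ u⁆ = ⁅⁅x, τ y⁆, τ u⁆ - τ ⁅b, u⁆ := by rw [hab, add_lie, hlie]; abel
    rw [this]
    exact sub_mem (hX _ (hτw u hu)) (hτw _ (w.lie_mem hb hu))
  · have : ⁅b, τ u⁆ = τ (⁅⁅x, τ y⁆, u⁆ - ⁅a, u⁆) := by
      rw [hab, add_lie, add_sub_cancel_left, hlie, hτ]
    rw [this]
    exact hVτ _ (sub_mem (hX _ (le_conjSum τ _ hu)) (le_conjSum τ _ (w.lie_mem ha hu)))

theorem lie_mem_conjSum (hlie : ∀ x y, τ ⁅x, y⁆ = ⁅τ x, τ y⁆) (P : LieSubalgebra ℂ L)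
    (hP : ∀ x ∈ P, ∀ y ∈ P, ⁅x, τ y⁆ ∈ conjSum τ P.toSubmodule) {x y : L}
    (hx : x ∈ conjSum τ P.toSubmodule) (hy : y ∈ conjSum τ P.toSubmodule) :
    ⁅x, y⁆ ∈ conjSum τ P.toSubmodule := by
  obtain ⟨a, ha, b, hb, rfl⟩ := mem_conjSum.1 hx
  obtain ⟨c, hc, d, hd, rfl⟩ := mem_conjSum.1 hy
  have : ⁅a + τ b, c + τ d⁆ = ⁅a, c⁆ + ⁅a, τ d⁆ - ⁅c, τ b⁆ + τ ⁅b, d⁆ := by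
    rw [add_lie, lie_add, lie_add, hlie, ← lie_skew c]; abel
  rw [this]
  exact add_mem (sub_mem (add_mem (le_conjSum τ _ (P.lie_mem ha hc)) (hP a ha d hd))
    (hP c hc b hb)) (map_le_conjSum τ _ ⟨_, P.lie_mem hb hd, rfl⟩)

theorem mem_pSubalgebra_of_mem_of_apply_mem (hτ : Function.Involutive τ)
    (hlie : ∀ x y, τ ⁅x, y⁆ = ⁅τ x, τ y⁆) {w : LieSubalgebra ℂ L} {x : L}
    (hx : x ∈ w) (hτx : τ x ∈ w) : x ∈ pSubalgebra τ w := by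
  refine (mem_pSubalgebra_iff τ).2 ⟨hx, fun u hu => ?_⟩
  rw [← hτ ⁅x, τ u⁆, hlie, hτ]
  exact map_le_conjSum τ _ ⟨_, w.lie_mem hτx hu, rfl⟩

theorem conjSum_pSubalgebra_le (hτ : Function.Involutive τ) {w : LieSubalgebra ℂ L}
    {Q : Submodule ℂ L} (hw : w.toSubmodule ≤ conjSum τ Q) :
    conjSum τ (pSubalgebra τ w).toSubmodule ≤ conjSum τ Q := by
  have hp : (pSubalgebra τ w).toSubmodule ≤ w.toSubmodule :=
    (LieSubalgebra.toSubmodule_le_toSubmodule _ _).2 (pSubalgebra_le τ w)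
  calc conjSum τ (pSubalgebra τ w).toSubmodule ≤ conjSum τ (conjSum τ Q) :=
        conjSum_mono τ (hp.trans hw)
    _ = conjSum τ Q := conjSum_conjSum τ hτ Q

/-- if `w` is a complex Lie subalgebra with `q ∩ σ(q) ⊆ w ⊆ q + σ(q)`, then
`p = { Z ∈ w : [Z, σ(w)] ⊆ w + σ(w) }` is a Lie subalgebra of `g`, and `l = p + σ(p)` is a
Lie subalgebra of `g` satisfying `q ∩ σ(q) ⊆ l ⊆ q + σ(q)`. -/
theorem pSet_lSet_isLieSubalgebra
    (σ : L → L)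
    (hadd : ∀ x y : L, σ (x + y) = σ x + σ y)
    (hsmul : ∀ (c : ℂ) (x : L), σ (c • x) = (starRingEnd ℂ) c • σ x)
    (hbr : ∀ x y : L, σ ⁅x, y⁆ = ⁅σ x, σ y⁆)
    (hinv : ∀ x : L, σ (σ x) = x)
    (q w : LieSubalgebra ℂ L)
    (hlow : ∀ x : L, x ∈ q → σ x ∈ q → x ∈ w)
    (hup : ∀ x ∈ w, ∃ a ∈ q, ∃ b ∈ q, x = a + σ b) :
    -- `p` is a Lie subalgebra
    (∀ x ∈ pSet σ w, ∀ y ∈ pSet σ w, x + y ∈ pSet σ w) ∧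
    (∀ c : ℂ, ∀ x ∈ pSet σ w, c • x ∈ pSet σ w) ∧
    (∀ x ∈ pSet σ w, ∀ y ∈ pSet σ w, ⁅x, y⁆ ∈ pSet σ w) ∧
    -- `l = p + σ(p)` is a Lie subalgebra
    (∀ x ∈ lSet σ w, ∀ y ∈ lSet σ w, x + y ∈ lSet σ w) ∧
    (∀ c : ℂ, ∀ x ∈ lSet σ w, c • x ∈ lSet σ w) ∧
    (∀ x ∈ lSet σ w, ∀ y ∈ lSet σ w, ⁅x, y⁆ ∈ lSet σ w) ∧
    -- `q ∩ σ(q) ⊆ l ⊆ q + σ(q)`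
    (∀ x : L, x ∈ q → σ x ∈ q → x ∈ lSet σ w) ∧
    (∀ x ∈ lSet σ w, ∃ a ∈ q, ∃ b ∈ q, x = a + σ b) := by
  obtain ⟨τ, rfl⟩ : ∃ τ : L →ₗ⋆[ℂ] L, ⇑τ = σ := ⟨⟨⟨σ, hadd⟩, hsmul⟩, rfl⟩
  set l := conjSum τ (pSubalgebra τ w).toSubmodule
  have hl_lie : ∀ x ∈ l, ∀ y ∈ l, ⁅x, y⁆ ∈ l := fun x hx y hy =>
    lie_mem_conjSum τ hbr _ (fun _ hx _ hy => lie_apply_mem_conjSum_pSubalgebra τ hinv hbr hx hy)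
      hx hy
  have hl_low : ∀ x ∈ q, τ x ∈ q → x ∈ l := fun x hxq hτxq =>
    le_conjSum τ _ (mem_pSubalgebra_of_mem_of_apply_mem τ hinv hbr (hlow x hxq hτxq)
      (hlow _ hτxq (by rwa [hinv])))
  have hl_up : l ≤ conjSum τ q.toSubmodule :=
    conjSum_pSubalgebra_le τ hinv fun x hx => mem_conjSum.2 (hup x hx)
  rw [← coe_conjSum_pSubalgebra, ← coe_pSubalgebra]
  exact ⟨fun _ hx _ hy => add_mem hx hy, fun c _ hx => LieSubalgebra.smul_mem _ c hx,
    fun _ hx _ hy => LieSubalgebra.lie_mem _ hx hy, fun _ hx _ hy => add_mem hx hy,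
    fun c _ hx => Submodule.smul_mem _ c hx, hl_lie, hl_low, fun _ hx => mem_conjSum.1 (hl_up hx)⟩
end

section
/- Let R be a root system in a Euclidean space, Q ⊆ R a parabolic subset (Q closed and Q ∪ (−Q) = R). Then there exists a unique Z-grading χ_Q : Z[R] → Z such that Q^r = {α ∈ R : χ_Q(α) = 0}, Q^n = {α ∈ R : χ_Q(α) > 0}, R\Q = {α ∈ R : χ_Q(α) < 0}, and {α ∈ R : χ_Q(α) = 1} generates Q^n (every element of Q^n is a sum of roots of degree one forming partial sums in R). -/
/-!
Choose a positive system inside `Q`: start from any linear form `g` that vanishes on no root; as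
long as some positive root lies outside `Q`, so does some simple root `α` (`Q` is closed), and
reflecting in `α` trades `α` for `-α ∈ Q` while permuting the other positive roots. The simple
roots are pairwise obtuse and lie in a half-space, hence linearly independent, so there is a
linear `F` equal to `0` on the simple roots in `Q ∩ -Q` and `1` on the others. Induction along
sums of positive roots shows that `F` is integral on roots and that its zero, positive and
negative sets are `Q^r`, `Q^n` and `R \ Q`. A root of degree at least two splits off a root of
degree one, which gives the generation property. For uniqueness, writing a root of `Q^n` as a sum
of degree-one roots of one grading bounds its degree in any other grading from below.
-/

open scoped RealInnerProductSpace

variable {V : Type*} [NormedAddCommGroup V] [InnerProductSpace ℝ V]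

/-- `R` is a (finite, reduced) root system in the Euclidean space `V`. -/
def IsRootSys (R : Set V) : Prop :=
  R.Finite ∧ (0 : V) ∉ R ∧
  (∀ α ∈ R, ∀ β ∈ R, β - (2 * ⟪β, α⟫ / ⟪α, α⟫) • α ∈ R) ∧
  (∀ α ∈ R, ∀ β ∈ R, ∃ n : ℤ, 2 * ⟪β, α⟫ / ⟪α, α⟫ = (n : ℝ)) ∧
  (∀ α ∈ R, ∀ t : ℝ, t • α ∈ R → t = 1 ∨ t = -1)

/-- `Q` is a parabolic subset of `R`: closed and `Q ∪ (−Q) = R`. -/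
def IsParabolicSet (R Q : Set V) : Prop :=
  Q ⊆ R ∧ (∀ α ∈ Q, ∀ β ∈ Q, α + β ∈ R → α + β ∈ Q) ∧ (∀ α ∈ R, α ∈ Q ∨ -α ∈ Q)

/-- `χ` is the canonical ℤ-grading attached to a parabolic set `Q ⊆ R`: it is additive on the
root lattice, vanishes exactly on `Q^r = Q ∩ (−Q)`, is positive exactly on `Q^n = Q \ (−Q)`,
negative exactly on `R \ Q`, and the roots of degree one generate `Q^n` (every root of `Q^n`
is a sum of degree-one roots whose partial sums are roots). -/
def IsCanonicalGrading (R Q : Set V) (χ : V → ℤ) : Prop :=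
  (∀ x ∈ AddSubgroup.closure R, ∀ y ∈ AddSubgroup.closure R, χ (x + y) = χ x + χ y) ∧
  (∀ α ∈ R, ((α ∈ Q ∧ -α ∈ Q) ↔ χ α = 0)) ∧
  (∀ α ∈ R, ((α ∈ Q ∧ -α ∉ Q) ↔ 0 < χ α)) ∧
  (∀ α ∈ R, (α ∉ Q ↔ χ α < 0)) ∧
  (∀ α ∈ R, α ∈ Q → -α ∉ Q → ∃ l : List V, l ≠ [] ∧ (∀ β ∈ l, β ∈ R ∧ χ β = 1) ∧
    (∀ k : ℕ, k < l.length → (l.take (k + 1)).sum ∈ R) ∧ l.sum = α)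

theorem Set.Finite.induction_on_apply_lt {ι : Type*} {s : Set ι} (hs : s.Finite) (f : ι → ℝ)
    {p : ι → Prop} (h : ∀ x ∈ s, (∀ y ∈ s, f y < f x → p y) → p x) : ∀ x ∈ s, p x := by
  by_contra! hne
  obtain ⟨x, ⟨hxs, hpx⟩, hmin⟩ :=
    (hs.subset (Set.sep_subset s (¬ p ·))).exists_minimalFor f _ hne
  exact hpx <| h x hxs fun y hys hyx => by_contra fun hpy => (hmin ⟨hys, hpy⟩ hyx.le).not_gt hyx

theorem apply_nonneg_of_mem_closure {M : Type*} [AddCommMonoid M] [Module ℝ M] (g : M →ₗ[ℝ] ℝ)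
    {s : Set M} (hs : ∀ x ∈ s, 0 < g x) {c : M} (hc : c ∈ AddSubmonoid.closure s) : 0 ≤ g c := by
  induction hc using AddSubmonoid.closure_induction with
  | mem x hx => exact (hs x hx).le
  | zero => simp
  | add x y _ _ hx hy => rw [map_add]; linarith

theorem eq_zero_of_mem_closure_of_apply_eq_zero {M : Type*} [AddCommMonoid M] [Module ℝ M]
    (g : M →ₗ[ℝ] ℝ) {s : Set M} (hs : ∀ x ∈ s, 0 < g x) {c : M}
    (hc : c ∈ AddSubmonoid.closure s) (h : g c = 0) : c = 0 := by
  induction hc using AddSubmonoid.closure_induction with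
  | mem x hx => exact absurd h (hs x hx).ne'
  | zero => rfl
  | add x y hx' hy' hx hy =>
    have := apply_nonneg_of_mem_closure g hs hx'
    have := apply_nonneg_of_mem_closure g hs hy'
    rw [map_add] at h
    rw [hx (by linarith), hy (by linarith), add_zero]

theorem LinearIndepOn.exists_dual_apply_eq {K M : Type*} [Field K] [AddCommGroup M] [Module K M]
    {s : Set M} (hs : LinearIndepOn K id s) (τ : M → K) :
    ∃ F : Module.Dual K M, ∀ δ ∈ s, F δ = τ δ := by
  refine ⟨(Module.Basis.extend hs).constr K fun i => τ i, fun δ hδ => ?_⟩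
  have hmem : δ ∈ hs.extend (Set.subset_univ _) := hs.subset_extend _ hδ
  simpa using (Module.Basis.extend hs).constr_basis K (fun i => τ i) ⟨δ, hmem⟩

theorem List.take_succ_sum_mem_append_singleton {M : Type*} [AddMonoid M] {s : Set M}
    {l : List M} {b : M} (hl : ∀ k < l.length, (l.take (k + 1)).sum ∈ s)
    (hb : (l ++ [b]).sum ∈ s) : ∀ k < (l ++ [b]).length, ((l ++ [b]).take (k + 1)).sum ∈ s := by
  intro k hk
  rw [List.length_append, List.length_singleton] at hk
  rcases (Nat.lt_succ_iff.1 hk).lt_or_eq with hk | rfl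
  · rw [List.take_append_of_le_length hk]; exact hl k hk
  · rwa [List.take_of_length_le (by simp)]

noncomputable def coroot (α : V) : Module.Dual ℝ V := (2 / ⟪α, α⟫) • innerₛₗ ℝ α

noncomputable def rootReflection (α : V) : V →ₗ[ℝ] V := Module.preReflection α (coroot α)

theorem rootReflection_apply (α β : V) :
    rootReflection α β = β - (2 * ⟪β, α⟫ / ⟪α, α⟫) • α := by
  simp only [rootReflection, coroot, Module.preReflection_apply, LinearMap.smul_apply,
    innerₛₗ_apply_apply, smul_eq_mul, real_inner_comm α β]
  ring_nf

theorem coroot_apply_self {α : V} (hα : α ≠ 0) : coroot α α = 2 := by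
  rw [coroot, LinearMap.smul_apply, innerₛₗ_apply_apply, smul_eq_mul,
    div_mul_cancel₀ _ (inner_self_ne_zero (𝕜 := ℝ).2 hα)]

theorem rootReflection_self {α : V} (hα : α ≠ 0) : rootReflection α α = -α :=
  Module.preReflection_apply_self (coroot_apply_self hα)

theorem rootReflection_rootReflection {α : V} (hα : α ≠ 0) (β : V) :
    rootReflection α (rootReflection α β) = β :=
  Module.involutive_preReflection (coroot_apply_self hα) β

namespace IsRootSys

variable {R : Set V}

theorem ne_zero (hR : IsRootSys R) {α : V} (hα : α ∈ R) : α ≠ 0 :=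
  fun h => hR.2.1 (h ▸ hα)

theorem inner_self_pos (hR : IsRootSys R) {α : V} (hα : α ∈ R) : 0 < ⟪α, α⟫ :=
  real_inner_self_pos.2 (hR.ne_zero hα)

theorem neg_mem (hR : IsRootSys R) {α : V} (hα : α ∈ R) : -α ∈ R := by
  have h := hR.2.2.1 α hα α hα
  rwa [mul_div_assoc, div_self (hR.inner_self_pos hα).ne', mul_one, two_smul,
    sub_add_cancel_left] at h

theorem eq_or_eq_neg_of_smul_mem (hR : IsRootSys R) {α : V} (hα : α ∈ R) {t : ℝ}
    (ht : t • α ∈ R) : t • α = α ∨ t • α = -α := by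
  rcases hR.2.2.2.2 α hα t ht with rfl | rfl <;> simp

theorem inner_sq_lt (hR : IsRootSys R) {α β : V} (hα : α ∈ R) (hβ : β ∈ R) (h₁ : β ≠ α)
    (h₂ : β ≠ -α) : ⟪α, β⟫ ^ 2 < ⟪α, α⟫ * ⟪β, β⟫ := by
  refine lt_of_le_of_ne (by simpa [sq] using real_inner_mul_inner_self_le α β) fun h => ?_
  have hnorm : ‖⟪α, β⟫‖ = ‖α‖ * ‖β‖ := by
    rw [Real.norm_eq_abs, ← sq_eq_sq₀ (abs_nonneg _) (by positivity), sq_abs, h, mul_pow,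
      real_inner_self_eq_norm_sq, real_inner_self_eq_norm_sq]
  obtain ⟨r, -, rfl⟩ := (norm_inner_eq_norm_iff (𝕜 := ℝ) (hR.ne_zero hα) (hR.ne_zero hβ)).1 hnorm
  rcases hR.eq_or_eq_neg_of_smul_mem hα hβ with h | h <;> contradiction

theorem add_mem_of_inner_neg (hR : IsRootSys R) {α β : V} (hα : α ∈ R) (hβ : β ∈ R)
    (hne : β ≠ -α) (hin : ⟪α, β⟫ < 0) : α + β ∈ R := by
  have hβα : β ≠ α := by rintro rfl; exact (hR.inner_self_pos hα).not_gt hin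
  obtain ⟨m, hm⟩ := hR.2.2.2.1 α hα β hβ
  obtain ⟨n, hn⟩ := hR.2.2.2.1 β hβ α hα
  have hαα := hR.inner_self_pos hα
  have hββ := hR.inner_self_pos hβ
  have hm0 : m < 0 := by
    have : (m : ℝ) < 0 := hm ▸ div_neg_of_neg_of_pos (by rw [real_inner_comm]; linarith) hαα
    exact_mod_cast this
  have hn0 : n < 0 := by
    have : (n : ℝ) < 0 := hn ▸ div_neg_of_neg_of_pos (by linarith) hββ
    exact_mod_cast this
  -- the product of the two Cartan integers is `4 cos² θ < 4`
  have hmn : m * n < 4 := by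
    have : (m : ℝ) * n < 4 := by
      rw [← hm, ← hn, div_mul_div_comm, div_lt_iff₀ (by positivity), real_inner_comm α β]
      nlinarith [hR.inner_sq_lt hα hβ hβα hne]
    exact_mod_cast this
  rcases (by by_contra! h; nlinarith [(by omega : m ≤ -2), (by omega : n ≤ -2)] :
      m = -1 ∨ n = -1) with h | h
  · have hmem := hR.2.2.1 α hα β hβ
    rwa [hm, h, Int.cast_neg, Int.cast_one, neg_smul, one_smul, sub_neg_eq_add, add_comm] at hmem
  · have hmem := hR.2.2.1 β hβ α hα
    rwa [hn, h, Int.cast_neg, Int.cast_one, neg_smul, one_smul, sub_neg_eq_add] at hmem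

theorem sub_mem_of_inner_pos (hR : IsRootSys R) {α β : V} (hα : α ∈ R) (hβ : β ∈ R)
    (hne : β ≠ α) (hin : 0 < ⟪α, β⟫) : α - β ∈ R := by
  simpa [sub_eq_add_neg] using hR.add_mem_of_inner_neg hα (hR.neg_mem hβ) (by simpa using hne)
    (by rwa [inner_neg_right, neg_neg_iff_pos])

/-- If neither holds, `c` is non-obtuse to `a` and `b` while `a + b + c` is non-acute to them,
and the two ways of computing `⟪a + b + c, a + b⟫` disagree. -/
theorem add_mem_or_add_mem (hR : IsRootSys R) {a b c : V} (ha : a ∈ R) (hb : b ∈ R) (hc : c ∈ R)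
    (hab : a + b ≠ 0) (habc : a + b + c ∈ R) (hca : c ≠ -a) (hcb : c ≠ -b) :
    a + c ∈ R ∨ b + c ∈ R := by
  by_contra! h
  have hac : 0 ≤ ⟪a, c⟫ := not_lt.1 fun hlt => h.1 (hR.add_mem_of_inner_neg ha hc hca hlt)
  have hbc : 0 ≤ ⟪b, c⟫ := not_lt.1 fun hlt => h.2 (hR.add_mem_of_inner_neg hb hc hcb hlt)
  have hta : ⟪a + b + c, a⟫ ≤ 0 := not_lt.1 fun hlt => h.2 <| by
    have := hR.sub_mem_of_inner_pos habc ha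
      (fun e => hcb (by linear_combination (norm := module) -e)) hlt
    rwa [show a + b + c - a = b + c by abel] at this
  have htb : ⟪a + b + c, b⟫ ≤ 0 := not_lt.1 fun hlt => h.1 <| by
    have := hR.sub_mem_of_inner_pos habc hb
      (fun e => hca (by linear_combination (norm := module) -e)) hlt
    rwa [show a + b + c - b = a + c by abel] at this
  have hpos : 0 < ⟪a + b, a + b⟫ := real_inner_self_pos.2 hab
  have : ⟪a + b + c, a + b⟫ = ⟪a + b, a + b⟫ + ⟪a, c⟫ + ⟪b, c⟫ := by
    simp only [inner_add_left, inner_add_right, real_inner_comm]; ring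
  have : ⟪a + b + c, a + b⟫ = ⟪a + b + c, a⟫ + ⟪a + b + c, b⟫ := inner_add_right _ _ _
  linarith

theorem rootReflection_mem (hR : IsRootSys R) {α β : V} (hα : α ∈ R) (hβ : β ∈ R) :
    rootReflection α β ∈ R := by
  rw [rootReflection_apply]; exact hR.2.2.1 α hα β hβ

end IsRootSys

def posRoots (R : Set V) (g : V →ₗ[ℝ] ℝ) : Set V := {α | α ∈ R ∧ 0 < g α}

def simpleRoots (R : Set V) (g : V →ₗ[ℝ] ℝ) : Set V :=
  {δ | δ ∈ posRoots R g ∧ ∀ β ∈ posRoots R g, ∀ γ ∈ posRoots R g, β + γ ≠ δ}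

namespace IsRootSys

variable {R Q : Set V} {g : V →ₗ[ℝ] ℝ}

theorem posRoots_induction (hR : IsRootSys R) {p : V → Prop}
    (simple : ∀ δ ∈ simpleRoots R g, p δ)
    (add : ∀ β ∈ posRoots R g, ∀ γ ∈ posRoots R g, β + γ ∈ R → p β → p γ → p (β + γ)) :
    ∀ α ∈ posRoots R g, p α := by
  intro α hα
  refine hR.1.induction_on_apply_lt g (p := fun α => α ∈ posRoots R g → p α) ?_ α hα.1 hα
  intro α _ ih hα
  by_cases hsimple : α ∈ simpleRoots R g
  · exact simple α hsimple
  obtain ⟨β, hβ, γ, hγ, rfl⟩ : ∃ β ∈ posRoots R g, ∃ γ ∈ posRoots R g, β + γ = α := by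
    simpa [simpleRoots, hα] using hsimple
  have hgβ : g β < g (β + γ) := by rw [map_add]; linarith [hγ.2]
  have hgγ : g γ < g (β + γ) := by rw [map_add]; linarith [hβ.2]
  exact add β hβ γ hγ hα.1 (ih β hβ.1 hgβ hβ) (ih γ hγ.1 hgγ hγ)

theorem posRoots_subset_closure_simpleRoots (hR : IsRootSys R) :
    posRoots R g ⊆ AddSubmonoid.closure (simpleRoots R g) :=
  hR.posRoots_induction (fun _ hδ => AddSubmonoid.subset_closure hδ)
    (fun _ _ _ _ _ hβ hγ => add_mem hβ hγ)

theorem exists_simpleRoots_inner_pos (hR : IsRootSys R) {α : V} (hα : α ∈ posRoots R g) :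
    ∃ δ ∈ simpleRoots R g, 0 < ⟪α, δ⟫ := by
  by_contra! h
  have hle : ⟪α, α⟫ ≤ 0 := by
    refine AddSubmonoid.closure_induction (motive := fun x _ => ⟪α, x⟫ ≤ 0) h (by simp)
      (fun x y _ _ hx hy => by rw [inner_add_right]; linarith)
      (hR.posRoots_subset_closure_simpleRoots hα)
  exact hle.not_gt (hR.inner_self_pos hα.1)

theorem mem_posRoots_or_neg_mem (hR : IsRootSys R) (hg : ∀ α ∈ R, g α ≠ 0) {α : V}
    (hα : α ∈ R) : α ∈ posRoots R g ∨ -α ∈ posRoots R g := by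
  rcases (hg α hα).lt_or_gt with h | h
  · exact .inr ⟨hR.neg_mem hα, by simpa using h⟩
  · exact .inl ⟨hα, h⟩

theorem sub_mem_posRoots (hR : IsRootSys R) (hg : ∀ α ∈ R, g α ≠ 0) {α δ : V}
    (hα : α ∈ posRoots R g) (hδ : δ ∈ simpleRoots R g) (hsub : α - δ ∈ R) :
    α - δ ∈ posRoots R g := by
  refine (hR.mem_posRoots_or_neg_mem hg hsub).resolve_right fun hneg => ?_
  exact hδ.2 α hα _ hneg (by abel)

theorem inner_simpleRoots_nonpos (hR : IsRootSys R) (hg : ∀ α ∈ R, g α ≠ 0) {δ δ' : V}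
    (hδ : δ ∈ simpleRoots R g) (hδ' : δ' ∈ simpleRoots R g) (hne : δ ≠ δ') : ⟪δ, δ'⟫ ≤ 0 := by
  by_contra! hin
  have hsub := hR.sub_mem_posRoots hg hδ.1 hδ' (hR.sub_mem_of_inner_pos hδ.1.1 hδ'.1.1 hne.symm hin)
  exact hδ.2 _ hsub δ' hδ'.1 (sub_add_cancel δ δ')

theorem linearIndepOn_simpleRoots (hR : IsRootSys R) (hg : ∀ α ∈ R, g α ≠ 0) :
    LinearIndepOn ℝ id (simpleRoots R g) :=
  LinearMap.BilinForm.linearIndependent_of_pairwise_le_zero (innerₗ V)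
    (fun _ hx => real_inner_self_pos.2 hx) g _
    (fun δ => δ.2.1.2)
    (fun δ δ' hne => hR.inner_simpleRoots_nonpos hg δ.2 δ'.2 (Subtype.coe_ne_coe.2 hne))

theorem exists_nsmul_add_eq (hR : IsRootSys R) {α x : V} (hα : α ∈ simpleRoots R g)
    (hx : x ∈ posRoots R g) :
    ∃ m : ℕ, ∃ c ∈ AddSubmonoid.closure (simpleRoots R g \ {α}), m • α + c = x := by
  have hx := hR.posRoots_subset_closure_simpleRoots hx
  rw [← Set.union_sdiff_cancel (Set.singleton_subset_iff.2 hα), AddSubmonoid.closure_union] at hx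
  obtain ⟨y, hy, c, hc, rfl⟩ := AddSubmonoid.mem_sup.1 hx
  obtain ⟨m, rfl⟩ := AddSubmonoid.mem_closure_singleton.1 hy
  exact ⟨m, c, hc, rfl⟩

theorem inner_nonpos_of_mem_closure_diff (hR : IsRootSys R) (hg : ∀ α ∈ R, g α ≠ 0) {α c : V}
    (hα : α ∈ simpleRoots R g) (hc : c ∈ AddSubmonoid.closure (simpleRoots R g \ {α})) :
    ⟪c, α⟫ ≤ 0 := by
  induction hc using AddSubmonoid.closure_induction with
  | mem δ hδ => exact hR.inner_simpleRoots_nonpos hg hδ.1 hα hδ.2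
  | zero => simp
  | add x y _ _ hx hy => rw [inner_add_left]; linarith

theorem eq_of_add_eq_smul (hR : IsRootSys R) (hg : ∀ α ∈ R, g α ≠ 0) {α β γ : V} {t : ℝ}
    (hα : α ∈ simpleRoots R g) (hβ : β ∈ posRoots R g) (hγ : γ ∈ posRoots R g)
    (h : β + γ = t • α) : β = α := by
  -- `c + c'` below is obtuse to `α`, `g`-nonnegative and a multiple of `α`, so it vanishes
  obtain ⟨m, c, hc, rfl⟩ := hR.exists_nsmul_add_eq hα hβ
  obtain ⟨m', c', hc', rfl⟩ := hR.exists_nsmul_add_eq hα hγ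
  have hpos : ∀ x ∈ simpleRoots R g \ {α}, 0 < g x := fun x hx => hx.1.1.2
  have hcc : c + c' = (t - m - m') • α := by
    rw [sub_smul, sub_smul, ← h]; simp only [Nat.cast_smul_eq_nsmul]; abel
  have hin := hR.inner_nonpos_of_mem_closure_diff hg hα (add_mem hc hc')
  have hg0 := apply_nonneg_of_mem_closure g hpos (add_mem hc hc')
  rw [hcc, real_inner_smul_left] at hin
  rw [hcc, map_smul, smul_eq_mul] at hg0
  have hαα := hR.inner_self_pos hα.1.1
  have hgα := hα.1.2
  have ht : t - m - m' = 0 := by nlinarith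
  rw [ht, zero_smul] at hcc
  have hgcc := congrArg g hcc
  rw [map_add, map_zero] at hgcc
  have hgc := apply_nonneg_of_mem_closure g hpos hc
  have hgc' := apply_nonneg_of_mem_closure g hpos hc'
  rw [eq_zero_of_mem_closure_of_apply_eq_zero g hpos hc (by linarith), add_zero] at hβ ⊢
  rcases hR.eq_or_eq_neg_of_smul_mem hα.1.1 (t := m)
      (by rw [Nat.cast_smul_eq_nsmul]; exact hβ.1) with h1 | h1
  · rwa [Nat.cast_smul_eq_nsmul] at h1
  · have := hβ.2
    rw [← Nat.cast_smul_eq_nsmul ℝ, h1, map_neg] at this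
    linarith

theorem rootReflection_mem_posRoots (hR : IsRootSys R) (hg : ∀ α ∈ R, g α ≠ 0) {α β : V}
    (hα : α ∈ simpleRoots R g) (hβ : β ∈ posRoots R g) (hne : β ≠ α) :
    rootReflection α β ∈ posRoots R g := by
  have hmem := hR.rootReflection_mem hα.1.1 hβ.1
  refine (hR.mem_posRoots_or_neg_mem hg hmem).resolve_right fun hneg => hne ?_
  refine hR.eq_of_add_eq_smul hg hα hβ hneg (t := 2 * ⟪β, α⟫ / ⟪α, α⟫) ?_
  rw [rootReflection_apply]; abel

theorem posRoots_subset_of_simpleRoots_subset (hR : IsRootSys R) (hQ : IsParabolicSet R Q)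
    (h : simpleRoots R g ⊆ Q) : posRoots R g ⊆ Q :=
  hR.posRoots_induction h fun β _ γ _ hβγ hβ hγ => hQ.2.1 β hβ γ hγ hβγ

theorem posRoots_comp_rootReflection_diff_ssubset (hR : IsRootSys R) (hQ : IsParabolicSet R Q)
    (hg : ∀ α ∈ R, g α ≠ 0) {α : V} (hα : α ∈ simpleRoots R g) (hαQ : α ∉ Q) :
    posRoots R (g ∘ₗ rootReflection α) \ Q ⊂ posRoots R g \ Q := by
  have hα0 := hR.ne_zero hα.1.1
  have hnegα : -α ∈ Q := (hQ.2.2 α hα.1.1).resolve_left hαQ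
  refine ⟨fun β ⟨⟨hβR, hβpos⟩, hβQ⟩ => ⟨?_, hβQ⟩, fun hsub => ?_⟩
  · have hsβ : rootReflection α β ∈ posRoots R g := ⟨hR.rootReflection_mem hα.1.1 hβR, hβpos⟩
    have hne : rootReflection α β ≠ α := fun h => hβQ <| by
      rwa [← rootReflection_rootReflection hα0 β, h, rootReflection_self hα0]
    simpa [rootReflection_rootReflection hα0] using hR.rootReflection_mem_posRoots hg hα hsβ hne
  · have := (hsub ⟨hα.1, hαQ⟩).1.2
    rw [LinearMap.comp_apply, rootReflection_self hα0, map_neg] at this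
    linarith [hα.1.2]

theorem exists_posRoots_subset (hR : IsRootSys R) (hQ : IsParabolicSet R Q) :
    ∃ g : V →ₗ[ℝ] ℝ, (∀ α ∈ R, g α ≠ 0) ∧ posRoots R g ⊆ Q := by
  have : Finite R := hR.1.to_subtype
  obtain ⟨g, hg⟩ := Module.exists_dual_forall_apply_ne_zero (K := ℝ) ((↑) : R → V)
    fun α => hR.ne_zero α.2
  replace hg : ∀ α ∈ R, g α ≠ 0 := fun α hα => hg ⟨α, hα⟩
  induction hn : (posRoots R g \ Q).ncard using Nat.strong_induction_on generalizing g with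
  | _ n ih =>
  by_cases hsub : posRoots R g ⊆ Q
  · exact ⟨g, hg, hsub⟩
  obtain ⟨α, hα, hαQ⟩ : ∃ α ∈ simpleRoots R g, α ∉ Q := by
    by_contra! h
    exact hsub (hR.posRoots_subset_of_simpleRoots_subset hQ h)
  have hlt := Set.ncard_lt_ncard (hR.posRoots_comp_rootReflection_diff_ssubset hQ hg hα hαQ)
    (hR.1.subset (Set.sdiff_subset.trans fun _ h => h.1))
  exact ih _ (hlt.trans_eq hn) _
    (fun β hβ => hg (rootReflection α β) (hR.rootReflection_mem hα.1.1 hβ)) rfl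

end IsRootSys

theorem IsParabolicSet.add_mem_and_neg_add_notMem {R Q : Set V} (hR : IsRootSys R)
    (hQ : IsParabolicSet R Q) {γ β : V} (hγ : γ ∈ Q) (hγ' : -γ ∉ Q) (hβ : β ∈ Q)
    (hs : γ + β ∈ R) : γ + β ∈ Q ∧ -(γ + β) ∉ Q := by
  refine ⟨hQ.2.1 γ hγ β hβ hs, fun hneg => hγ' ?_⟩
  have h := hQ.2.1 β hβ _ hneg (by simpa using hR.neg_mem (hQ.1 hγ))
  rwa [show β + -(γ + β) = -γ by abel] at h

open Classical in
/-- `F` is the real-linear extension of `χ_Q`, and `g` cuts out a positive system inside `Q`. -/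
structure IsGradingFunctional (R Q : Set V) (g F : V →ₗ[ℝ] ℝ) : Prop where
  rootSys : IsRootSys R
  parabolic : IsParabolicSet R Q
  generic : ∀ α ∈ R, g α ≠ 0
  posRoots_subset : posRoots R g ⊆ Q
  apply_simpleRoots : ∀ δ ∈ simpleRoots R g, F δ = if -δ ∈ Q then 0 else 1

open Classical in
theorem exists_isGradingFunctional {R Q : Set V} (hR : IsRootSys R) (hQ : IsParabolicSet R Q) :
    ∃ g F : V →ₗ[ℝ] ℝ, IsGradingFunctional R Q g F := by
  obtain ⟨g, hg, hgQ⟩ := hR.exists_posRoots_subset hQ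
  obtain ⟨F, hF⟩ := LinearIndepOn.exists_dual_apply_eq
    (hR.linearIndepOn_simpleRoots hg) fun δ => if -δ ∈ Q then 0 else 1
  exact ⟨g, F, hR, hQ, hg, hgQ, hF⟩

namespace IsGradingFunctional

variable {R Q : Set V} {g F : V →ₗ[ℝ] ℝ}

theorem apply_simpleRoots_eq_zero_or_one (S : IsGradingFunctional R Q g F) {δ : V}
    (hδ : δ ∈ simpleRoots R g) : F δ = 0 ∨ F δ = 1 := by
  rw [S.apply_simpleRoots δ hδ]; split_ifs <;> simp

theorem exists_natCast_of_mem_posRoots (S : IsGradingFunctional R Q g F) {α : V}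
    (hα : α ∈ posRoots R g) : ∃ n : ℕ, F α = n := by
  refine S.rootSys.posRoots_induction (p := fun α => ∃ n : ℕ, F α = n) (fun δ hδ => ?_)
    (fun β _ γ _ _ ⟨m, hm⟩ ⟨n, hn⟩ => ⟨m + n, by rw [map_add, hm, hn, Nat.cast_add]⟩) α hα
  rcases S.apply_simpleRoots_eq_zero_or_one hδ with h | h
  exacts [⟨0, by simp [h]⟩, ⟨1, by simp [h]⟩]

theorem nonneg_of_mem_posRoots (S : IsGradingFunctional R Q g F) {α : V}
    (hα : α ∈ posRoots R g) : 0 ≤ F α := by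
  obtain ⟨n, hn⟩ := S.exists_natCast_of_mem_posRoots hα
  exact hn ▸ n.cast_nonneg

theorem neg_mem_iff_of_mem_posRoots (S : IsGradingFunctional R Q g F) {α : V}
    (hα : α ∈ posRoots R g) : -α ∈ Q ↔ F α = 0 := by
  have hR := S.rootSys
  refine hR.posRoots_induction (p := fun α => -α ∈ Q ↔ F α = 0) (fun δ hδ => ?_)
    (fun β hβ γ hγ hβγ ihβ ihγ => ?_) α hα
  · rw [S.apply_simpleRoots δ hδ]; split_ifs <;> simp_all
  have hβ0 := S.nonneg_of_mem_posRoots hβ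
  have hγ0 := S.nonneg_of_mem_posRoots hγ
  rw [map_add, add_eq_zero_iff_of_nonneg hβ0 hγ0, ← ihβ, ← ihγ]
  constructor
  · intro h
    by_contra hne
    rcases not_and_or.1 hne with h' | h'
    · exact (S.parabolic.add_mem_and_neg_add_notMem hR (S.posRoots_subset hβ) h'
        (S.posRoots_subset hγ) hβγ).2 h
    · exact (S.parabolic.add_mem_and_neg_add_notMem hR (S.posRoots_subset hγ) h'
        (S.posRoots_subset hβ) (by rwa [add_comm])).2 (by rwa [add_comm])
  · rintro ⟨hβ', hγ'⟩
    rw [neg_add]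
    exact S.parabolic.2.1 _ hβ' _ hγ' (by rw [← neg_add]; exact hR.neg_mem hβγ)

theorem mem_and_neg_mem_iff (S : IsGradingFunctional R Q g F) {α : V} (hα : α ∈ R) :
    (α ∈ Q ∧ -α ∈ Q) ↔ F α = 0 := by
  rcases S.rootSys.mem_posRoots_or_neg_mem S.generic hα with h | h
  · simpa [S.posRoots_subset h] using S.neg_mem_iff_of_mem_posRoots h
  · simpa [S.posRoots_subset h] using S.neg_mem_iff_of_mem_posRoots h

theorem mem_and_neg_notMem_iff (S : IsGradingFunctional R Q g F) {α : V} (hα : α ∈ R) :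
    (α ∈ Q ∧ -α ∉ Q) ↔ 0 < F α := by
  rcases S.rootSys.mem_posRoots_or_neg_mem S.generic hα with h | h
  · rw [(S.nonneg_of_mem_posRoots h).lt_iff_ne', Ne, ← S.neg_mem_iff_of_mem_posRoots h]
    simp [S.posRoots_subset h]
  · simpa [S.posRoots_subset h] using S.nonneg_of_mem_posRoots h

theorem notMem_iff (S : IsGradingFunctional R Q g F) {α : V} (hα : α ∈ R) :
    α ∉ Q ↔ F α < 0 := by
  rcases S.rootSys.mem_posRoots_or_neg_mem S.generic hα with h | h
  · simpa [S.posRoots_subset h] using S.nonneg_of_mem_posRoots h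
  · have hneg := S.neg_mem_iff_of_mem_posRoots h
    have hle := S.nonneg_of_mem_posRoots h
    rw [neg_neg, map_neg, neg_eq_zero] at hneg
    rw [map_neg, neg_nonneg] at hle
    rw [hneg, hle.lt_iff_ne]

theorem exists_intCast (S : IsGradingFunctional R Q g F) {α : V} (hα : α ∈ R) :
    ∃ z : ℤ, F α = z := by
  rcases S.rootSys.mem_posRoots_or_neg_mem S.generic hα with h | h
  · obtain ⟨n, hn⟩ := S.exists_natCast_of_mem_posRoots h
    exact ⟨n, by simp [hn]⟩
  · obtain ⟨n, hn⟩ := S.exists_natCast_of_mem_posRoots h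
    exact ⟨-n, by simp [← hn]⟩

theorem exists_intCast_of_mem_closure (S : IsGradingFunctional R Q g F) {x : V}
    (hx : x ∈ AddSubgroup.closure R) : ∃ z : ℤ, F x = z := by
  induction hx using AddSubgroup.closure_induction with
  | mem α hα => exact S.exists_intCast hα
  | zero => exact ⟨0, by simp⟩
  | add x y _ _ hx hy =>
    obtain ⟨a, ha⟩ := hx
    obtain ⟨b, hb⟩ := hy
    exact ⟨a + b, by simp [ha, hb]⟩
  | neg x _ hx =>
    obtain ⟨a, ha⟩ := hx
    exact ⟨-a, by simp [ha]⟩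

theorem mem_posRoots_of_pos (S : IsGradingFunctional R Q g F) {α : V} (hα : α ∈ R)
    (hpos : 0 < F α) : α ∈ posRoots R g :=
  (S.rootSys.mem_posRoots_or_neg_mem S.generic hα).resolve_right fun h =>
    ((S.mem_and_neg_notMem_iff hα).2 hpos).2 (S.posRoots_subset h)

/-- Peel off a simple root `δ` with `⟪α, δ⟫ > 0`; if `δ` has degree zero, recurse on `α - δ` and
reattach `δ` to one of the two summands found there. -/
theorem exists_sub_mem_of_two_le (S : IsGradingFunctional R Q g F) :
    ∀ α ∈ R, 2 ≤ F α → ∃ β ∈ R, F β = 1 ∧ α - β ∈ R := by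
  have hR := S.rootSys
  refine hR.1.induction_on_apply_lt g fun α hαR ih hα2 => ?_
  obtain ⟨δ, hδ, hin⟩ := hR.exists_simpleRoots_inner_pos (S.mem_posRoots_of_pos hαR (by linarith))
  have hδα : δ ≠ α := by
    rintro rfl; rcases S.apply_simpleRoots_eq_zero_or_one hδ with h | h <;> linarith
  have hsub : α - δ ∈ R := hR.sub_mem_of_inner_pos hαR hδ.1.1 hδα hin
  rcases S.apply_simpleRoots_eq_zero_or_one hδ with hδ0 | hδ1
  · have hgsub : g (α - δ) < g α := by rw [map_sub]; linarith [hδ.1.2]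
    obtain ⟨β, hβR, hβ1, hβsub⟩ := ih (α - δ) hsub hgsub (by rwa [map_sub, hδ0, sub_zero])
    have hδa : δ ≠ -(α - δ - β) := fun h => by
      have := congrArg F h
      simp only [map_neg, map_sub, hδ0, hβ1] at this
      linarith
    have hδb : δ ≠ -β := fun h => by
      have := congrArg F h
      rw [map_neg, hδ0, hβ1] at this
      norm_num at this
    rcases hR.add_mem_or_add_mem hβsub hβR hδ.1.1 (by rw [sub_add_cancel]; exact hR.ne_zero hsub)
      (by rwa [sub_add_cancel, sub_add_cancel]) hδa hδb with h | h
    · exact ⟨β, hβR, hβ1, by rwa [show α - δ - β + δ = α - β by abel] at h⟩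
    · exact ⟨β + δ, h, by rw [map_add, hβ1, hδ0, add_zero],
        by rwa [show α - (β + δ) = α - δ - β by abel]⟩
  · exact ⟨δ, hδ.1.1, hδ1, hsub⟩

theorem exists_chain (S : IsGradingFunctional R Q g F) (n : ℕ) :
    ∀ α ∈ R, F α = n + 1 → ∃ l : List V, l ≠ [] ∧ (∀ β ∈ l, β ∈ R ∧ F β = 1) ∧
      (∀ k < l.length, (l.take (k + 1)).sum ∈ R) ∧ l.sum = α := by
  induction n with
  | zero =>
    intro α hα h
    refine ⟨[α], by simp, by simpa [hα] using h, fun k hk => ?_, by simp⟩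
    obtain rfl : k = 0 := by simpa using hk
    simpa using hα
  | succ n ih =>
    intro α hα h
    obtain ⟨β, hβR, hβ1, hsub⟩ := S.exists_sub_mem_of_two_le α hα (by rw [h]; push_cast; linarith)
    obtain ⟨l, hl, hlF, hlR, hlsum⟩ := ih (α - β) hsub (by rw [map_sub, h, hβ1]; push_cast; ring)
    have hsum : (l ++ [β]).sum = α := by simp [hlsum]
    refine ⟨l ++ [β], by simp, fun γ hγ => ?_,
      List.take_succ_sum_mem_append_singleton hlR (hsum ▸ hα), hsum⟩
    rcases List.mem_append.1 hγ with hγ | hγ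
    exacts [hlF γ hγ, by simp_all]

theorem isCanonicalGrading (S : IsGradingFunctional R Q g F) :
    IsCanonicalGrading R Q fun v => round (F v) := by
  refine ⟨fun x hx y hy => ?_, fun α hα => ?_, fun α hα => ?_, fun α hα => ?_,
    fun α hα h₁ h₂ => ?_⟩ <;> beta_reduce
  · obtain ⟨a, ha⟩ := S.exists_intCast_of_mem_closure hx
    obtain ⟨b, hb⟩ := S.exists_intCast_of_mem_closure hy
    rw [map_add, ha, hb, ← Int.cast_add, round_intCast, round_intCast, round_intCast]
  all_goals obtain ⟨z, hz⟩ := S.exists_intCast hα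
  · rw [S.mem_and_neg_mem_iff hα, hz, round_intCast, Int.cast_eq_zero]
  · rw [S.mem_and_neg_notMem_iff hα, hz, round_intCast, Int.cast_pos]
  · rw [S.notMem_iff hα, hz, round_intCast, Int.cast_lt_zero]
  · have hz1 : 0 < z := by exact_mod_cast hz ▸ (S.mem_and_neg_notMem_iff hα).1 ⟨h₁, h₂⟩
    obtain ⟨l, hl, hlF, hlR, hlsum⟩ := S.exists_chain (z - 1).toNat α hα
      (by rw [hz]; exact_mod_cast (by omega : z = ((z - 1).toNat : ℤ) + 1))
    exact ⟨l, hl, fun β hβ => ⟨(hlF β hβ).1, by simp [(hlF β hβ).2]⟩, hlR, hlsum⟩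

end IsGradingFunctional

namespace IsCanonicalGrading

variable {W : Type*} [NormedAddCommGroup W] {R Q : Set W} {χ χ' : W → ℤ}

theorem map_zero (h : IsCanonicalGrading R Q χ) : χ 0 = 0 := by
  simpa using h.1 0 (zero_mem _) 0 (zero_mem _)

theorem map_neg (h : IsCanonicalGrading R Q χ) {x : W} (hx : x ∈ AddSubgroup.closure R) :
    χ (-x) = -χ x := by
  have := h.1 x hx (-x) (neg_mem hx)
  rw [add_neg_cancel, h.map_zero] at this
  omega

theorem map_list_sum (h : IsCanonicalGrading R Q χ) {l : List W} (hl : ∀ β ∈ l, β ∈ R) :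
    χ l.sum = (l.map χ).sum := by
  induction l with
  | nil => simpa using h.map_zero
  | cons β l ih =>
    simp only [List.forall_mem_cons] at hl
    rw [List.sum_cons, h.1 β (AddSubgroup.subset_closure hl.1) l.sum
      (list_sum_mem fun γ hγ => AddSubgroup.subset_closure (hl.2 γ hγ)),
      ih hl.2, List.map_cons, List.sum_cons]

/-- A root of `Q^n` is a sum of `χ α` roots of `χ`-degree one, each of positive `χ'`-degree. -/
theorem le_of_mem_of_neg_notMem (h : IsCanonicalGrading R Q χ) (h' : IsCanonicalGrading R Q χ')
    {α : W} (hα : α ∈ R) (h₁ : α ∈ Q) (h₂ : -α ∉ Q) : χ α ≤ χ' α := by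
  obtain ⟨l, -, hl, -, rfl⟩ := h.2.2.2.2 α hα h₁ h₂
  rw [h.map_list_sum fun β hβ => (hl β hβ).1, h'.map_list_sum fun β hβ => (hl β hβ).1]
  refine List.sum_le_sum fun β hβ => ?_
  obtain ⟨hβR, hβ1⟩ := hl β hβ
  have := (h'.2.2.1 β hβR).1 ((h.2.2.1 β hβR).2 (by omega))
  omega

end IsCanonicalGrading

theorem IsCanonicalGrading.eqOn {R Q : Set V} {χ χ' : V → ℤ} (h' : IsCanonicalGrading R Q χ')
    (hR : IsRootSys R) (hQ : IsParabolicSet R Q) (h : IsCanonicalGrading R Q χ) :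
    Set.EqOn χ' χ R := by
  intro α hα
  by_cases h₁ : α ∈ Q
  · by_cases h₂ : -α ∈ Q
    · rw [(h'.2.1 α hα).1 ⟨h₁, h₂⟩, (h.2.1 α hα).1 ⟨h₁, h₂⟩]
    · exact le_antisymm (h'.le_of_mem_of_neg_notMem h hα h₁ h₂)
        (h.le_of_mem_of_neg_notMem h' hα h₁ h₂)
  · have h₂ : -α ∈ Q := (hQ.2.2 α hα).resolve_left h₁
    have h₃ : - -α ∉ Q := by rwa [neg_neg]
    have := le_antisymm (h'.le_of_mem_of_neg_notMem h (hR.neg_mem hα) h₂ h₃)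
      (h.le_of_mem_of_neg_notMem h' (hR.neg_mem hα) h₂ h₃)
    rw [h'.map_neg (AddSubgroup.subset_closure hα), h.map_neg (AddSubgroup.subset_closure hα)]
      at this
    omega

/-- every parabolic subset `Q` of a root system `R` admits a unique canonical
ℤ-grading `χ_Q` (uniqueness holding for the values on the roots). -/
theorem exists_unique_canonical_grading
    (R Q : Set V) (hR : IsRootSys R) (hQ : IsParabolicSet R Q) :
    ∃ χ : V → ℤ, IsCanonicalGrading R Q χ ∧
      ∀ χ' : V → ℤ, IsCanonicalGrading R Q χ' → ∀ α ∈ R, χ' α = χ α := by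
  obtain ⟨g, F, S⟩ := exists_isGradingFunctional hR hQ
  exact ⟨_, S.isCanonicalGrading, fun χ' hχ' => hχ'.eqOn hR hQ S.isCanonicalGrading⟩
end

section
/- Let R be a root system of type A_{ℓ} with ℓ ≥ 3, realized as R = {e_i − e_j : 1 ≤ i ≠ j ≤ ℓ+1}. Then the maximal length μ(α) of an admissible sequence for any root α equals 2, where an admissible sequence (β₁,…,β_q) for α satisfies: every sub-sum β_{j₁}+⋯+β_{j_h} (h ≥ 2, distinct indices) is neither a root nor 0, and α plus every sub-sum of the β's (h ≥ 1, distinct indices) is a root different from α. -/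
open scoped BigOperators

/-- The root system of type `A_ℓ`: `R = { e_i − e_j : i ≠ j }` in `ℝ^{ℓ+1}`. -/
def rootsA (ℓ : ℕ) : Set (Fin (ℓ + 1) → ℝ) :=
  {v | ∃ i j : Fin (ℓ + 1), i ≠ j ∧ v = Pi.single i (1 : ℝ) - Pi.single j (1 : ℝ)}

/-- `(β₁,…,β_q)` is an admissible sequence for the root `α`: each `β_i` is a root, every
sub-sum of at least two of the `β`'s is neither a root nor `0`, and `α` plus every nonempty
sub-sum of the `β`'s is a root different from `α`. -/
def AdmSeq (ℓ q : ℕ) (α : Fin (ℓ + 1) → ℝ) (β : Fin q → (Fin (ℓ + 1) → ℝ)) : Prop :=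
  (∀ i, β i ∈ rootsA ℓ) ∧
  (∀ s : Finset (Fin q), 2 ≤ s.card →
    (∑ i ∈ s, β i) ∉ rootsA ℓ ∧ (∑ i ∈ s, β i) ≠ 0) ∧
  (∀ s : Finset (Fin q), s.Nonempty →
    (α + ∑ i ∈ s, β i) ∈ rootsA ℓ ∧ α + ∑ i ∈ s, β i ≠ α)

/-!
All roots of `A_ℓ` have squared length `2`, so if `α = e_i - e_j` and `α + β` are roots then
`⟨α, β⟩ = -1`, i.e. `β_i - β_j = -1`; hence `β_i ∈ {0, -1}`. If moreover `α + β + γ` is a root,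
its inner product with `α` is `2 - 1 - 1 = 0`, so its `i`-th and `j`-th coordinates agree and
must both vanish: `β_i + γ_i = -1`. Three numbers in `{0, -1}` cannot pairwise sum to `-1`, so an
admissible sequence has length at most `2`. Conversely, for `k, m ∉ {i, j}` distinct (this needs
`ℓ ≥ 3`), `(e_j - e_k, e_m - e_i)` is admissible.
-/

open Matrix

theorem single_sub_single_dotProduct {ι R : Type*} [Fintype ι] [DecidableEq ι] [Ring R]
    (i j : ι) (v : ι → R) : (Pi.single i 1 - Pi.single j 1) ⬝ᵥ v = v i - v j := by
  simp [sub_dotProduct, single_dotProduct]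

theorem exists_ne_ne_of_four_le_card {ι : Type*} [Fintype ι] [DecidableEq ι]
    (h : 4 ≤ Fintype.card ι) (i j : ι) :
    ∃ k m : ι, k ≠ i ∧ k ≠ j ∧ m ≠ i ∧ m ≠ j ∧ k ≠ m := by
  have hcard : 1 < ({i, j}ᶜ : Finset ι).card := by
    have := Finset.card_le_two (a := i) (b := j)
    rw [Finset.card_compl]
    omega
  obtain ⟨k, hk, m, hm, hkm⟩ := Finset.one_lt_card.mp hcard
  simp only [Finset.mem_compl, Finset.mem_insert, Finset.mem_singleton, not_or] at hk hm
  exact ⟨k, m, hk.1, hk.2, hm.1, hm.2, hkm⟩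

namespace rootsA

variable {ℓ : ℕ}

theorem apply_eq_neg_one_or_zero_or_one {v : Fin (ℓ + 1) → ℝ} (hv : v ∈ rootsA ℓ)
    (x : Fin (ℓ + 1)) : v x = -1 ∨ v x = 0 ∨ v x = 1 := by
  obtain ⟨a, b, -, rfl⟩ := hv
  simp only [Pi.sub_apply, Pi.single_apply]
  split_ifs <;> norm_num

theorem eq_of_apply_eq {v : Fin (ℓ + 1) → ℝ} (hv : v ∈ rootsA ℓ) {x y : Fin (ℓ + 1)}
    (hxy : v x = v y) (hx : v x ≠ 0) : x = y := by
  obtain ⟨a, b, -, rfl⟩ := hv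
  simp only [Pi.sub_apply, Pi.single_apply] at hxy hx
  split_ifs at hxy hx <;> grind

theorem dotProduct_self {v : Fin (ℓ + 1) → ℝ} (hv : v ∈ rootsA ℓ) : v ⬝ᵥ v = 2 := by
  obtain ⟨a, b, hab, rfl⟩ := hv
  rw [single_sub_single_dotProduct]
  norm_num [hab, hab.symm]

theorem ne_zero {v : Fin (ℓ + 1) → ℝ} (hv : v ∈ rootsA ℓ) : v ≠ 0 := by
  rintro rfl
  simpa using dotProduct_self hv

theorem dotProduct_eq_neg_one_of_add_mem {α β : Fin (ℓ + 1) → ℝ} (hα : α ∈ rootsA ℓ)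
    (hβ : β ∈ rootsA ℓ) (hαβ : α + β ∈ rootsA ℓ) : α ⬝ᵥ β = -1 := by
  have h := dotProduct_self hαβ
  rw [add_dotProduct, dotProduct_add, dotProduct_add, dotProduct_self hα, dotProduct_self hβ,
    dotProduct_comm β α] at h
  linarith

end rootsA

section Admissible

variable {ℓ : ℕ} {i j : Fin (ℓ + 1)}

theorem apply_left_eq_zero_or_neg_one_of_add_mem_rootsA (hij : i ≠ j)
    {β : Fin (ℓ + 1) → ℝ} (hβ : β ∈ rootsA ℓ)
    (hαβ : Pi.single i 1 - Pi.single j 1 + β ∈ rootsA ℓ) : β i = 0 ∨ β i = -1 := by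
  have hdot := rootsA.dotProduct_eq_neg_one_of_add_mem ⟨i, j, hij, rfl⟩ hβ hαβ
  rw [single_sub_single_dotProduct] at hdot
  rcases rootsA.apply_eq_neg_one_or_zero_or_one hβ j with h | h | h <;>
    rcases rootsA.apply_eq_neg_one_or_zero_or_one hβ i with h' | h' | h' <;>
    first | (left; linarith) | (right; linarith)

theorem apply_left_add_apply_left_eq_neg_one (hij : i ≠ j) {β γ : Fin (ℓ + 1) → ℝ}
    (hβ : β ∈ rootsA ℓ) (hγ : γ ∈ rootsA ℓ)
    (hαβ : Pi.single i 1 - Pi.single j 1 + β ∈ rootsA ℓ)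
    (hαγ : Pi.single i 1 - Pi.single j 1 + γ ∈ rootsA ℓ)
    (hαβγ : Pi.single i 1 - Pi.single j 1 + (β + γ) ∈ rootsA ℓ) : β i + γ i = -1 := by
  set α : Fin (ℓ + 1) → ℝ := Pi.single i 1 - Pi.single j 1
  have hα : α ∈ rootsA ℓ := ⟨i, j, hij, rfl⟩
  have hdot : α ⬝ᵥ (α + (β + γ)) = 0 := by
    rw [dotProduct_add, dotProduct_add, rootsA.dotProduct_self hα,
      rootsA.dotProduct_eq_neg_one_of_add_mem hα hβ hαβ,
      rootsA.dotProduct_eq_neg_one_of_add_mem hα hγ hαγ]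
    norm_num
  rw [single_sub_single_dotProduct, sub_eq_zero] at hdot
  have hzero : (α + (β + γ)) i = 0 := by
    by_contra hne
    exact hij (rootsA.eq_of_apply_eq hαβγ hdot hne)
  have hαi : α i = 1 := by simp [α, hij]
  simp only [Pi.add_apply, hαi] at hzero
  linarith

theorem not_admSeq_of_two_lt {q : ℕ} (hq : 2 < q) {α : Fin (ℓ + 1) → ℝ} (hα : α ∈ rootsA ℓ)
    (β : Fin q → Fin (ℓ + 1) → ℝ) : ¬ AdmSeq ℓ q α β := by
  obtain ⟨i, j, hij, rfl⟩ := hα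
  rintro ⟨hβ, -, hsum⟩
  have hαβ (t : Fin q) : Pi.single i 1 - Pi.single j 1 + β t ∈ rootsA ℓ := by
    simpa using (hsum {t} (Finset.singleton_nonempty t)).1
  have hval (t : Fin q) : β t i = 0 ∨ β t i = -1 :=
    apply_left_eq_zero_or_neg_one_of_add_mem_rootsA hij (hβ t) (hαβ t)
  have hpair (t u : Fin q) (htu : t ≠ u) : β t i + β u i = -1 := by
    refine apply_left_add_apply_left_eq_neg_one hij (hβ t) (hβ u) (hαβ t) (hαβ u) ?_
    simpa [Finset.sum_pair htu] using (hsum {t, u} (Finset.insert_nonempty t {u})).1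
  let t₀ : Fin q := ⟨0, by omega⟩
  let t₁ : Fin q := ⟨1, by omega⟩
  let t₂ : Fin q := ⟨2, by omega⟩
  have h₀₁ := hpair t₀ t₁ (by simp [t₀, t₁, Fin.ext_iff])
  have h₀₂ := hpair t₀ t₂ (by simp [t₀, t₂, Fin.ext_iff])
  have h₁₂ := hpair t₁ t₂ (by simp [t₁, t₂, Fin.ext_iff])
  rcases hval t₁ with h | h <;> linarith

theorem admSeq_two {α β₀ β₁ : Fin (ℓ + 1) → ℝ} (h₀ : β₀ ∈ rootsA ℓ) (h₁ : β₁ ∈ rootsA ℓ)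
    (h₀₁ : β₀ + β₁ ∉ rootsA ℓ) (h₀₁' : β₀ + β₁ ≠ 0) (hα₀ : α + β₀ ∈ rootsA ℓ)
    (hα₁ : α + β₁ ∈ rootsA ℓ) (hα₀₁ : α + (β₀ + β₁) ∈ rootsA ℓ) :
    AdmSeq ℓ 2 α ![β₀, β₁] := by
  have huniv : ∀ s : Finset (Fin 2), 2 ≤ s.card → s = {0, 1} := by decide
  have hne : ∀ s : Finset (Fin 2), s.Nonempty → s = {0} ∨ s = {1} ∨ s = {0, 1} := by decide
  refine ⟨fun t => by fin_cases t <;> assumption, fun s hs => ?_, fun s hs => ?_⟩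
  · rw [huniv s hs, Finset.sum_pair zero_ne_one]
    exact ⟨h₀₁, h₀₁'⟩
  · rcases hne s hs with rfl | rfl | rfl
    · simpa using ⟨hα₀, rootsA.ne_zero h₀⟩
    · simpa using ⟨hα₁, rootsA.ne_zero h₁⟩
    · simpa [Finset.sum_pair zero_ne_one] using ⟨hα₀₁, h₀₁'⟩

theorem exists_admSeq_two (hl : 3 ≤ ℓ) {α : Fin (ℓ + 1) → ℝ} (hα : α ∈ rootsA ℓ) :
    ∃ β : Fin 2 → Fin (ℓ + 1) → ℝ, AdmSeq ℓ 2 α β := by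
  obtain ⟨i, j, hij, rfl⟩ := hα
  obtain ⟨k, m, hki, hkj, hmi, hmj, hkm⟩ :=
    exists_ne_ne_of_four_le_card (by simpa using hl : 4 ≤ Fintype.card (Fin (ℓ + 1))) i j
  set e : Fin (ℓ + 1) → Fin (ℓ + 1) → ℝ := fun a => Pi.single a 1
  have hj : (e j - e k + (e m - e i)) j = 1 := by simp [e, hij.symm, hkj.symm, hmj.symm]
  have hm : (e j - e k + (e m - e i)) m = 1 := by simp [e, hmi, hmj, hkm.symm]
  refine ⟨_, admSeq_two (β₀ := e j - e k) (β₁ := e m - e i) ⟨j, k, hkj.symm, rfl⟩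
    ⟨m, i, hmi, rfl⟩ (fun h => hmj (rootsA.eq_of_apply_eq h (hm.trans hj.symm) (by simp [hm])))
    (fun h => by rw [h] at hj; simp at hj) ⟨i, k, hki.symm, by abel⟩ ⟨m, j, hmj, by abel⟩
    ⟨m, k, hkm.symm, by abel⟩⟩

end Admissible

/-- in a root system of type `A_ℓ` with `ℓ ≥ 3`, the maximal length `μ(α)` of an
admissible sequence for any root `α` equals `2`: there is an admissible sequence of length `2`
and none of length `> 2`. -/
theorem index_typeA_eq_two
    (ℓ : ℕ) (hl : 3 ≤ ℓ) (α : Fin (ℓ + 1) → ℝ) (hα : α ∈ rootsA ℓ) :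
    (∃ β : Fin 2 → (Fin (ℓ + 1) → ℝ), AdmSeq ℓ 2 α β) ∧
    (∀ (q : ℕ) (β : Fin q → (Fin (ℓ + 1) → ℝ)), 2 < q → ¬ AdmSeq ℓ q α β) :=
  ⟨exists_admSeq_two hl hα, fun _ β hq => not_admSeq_of_two_lt hq hα β⟩
end
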